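/- arXiv:2210.03456 — 6 statements merged into one kernel-verified Lean document; each statement's English description precedes it below -/
import Mathlib

section
/- In a symmetric composition algebra (S, *, n), the identity n(x*y, z) = n(x, y*z) for all x, y, z is equivalent to the identity (x*y)*x = x*(y*x) = n(x)y for all x, y. -/
/-- In a symmetric composition algebra `(S, *, n)` (a nonassociative algebra with a
nonsingular multiplicative quadratic form `n`), the identity
`n(x*y, z) = n(x, y*z)` is equivalent to `(x*y)*x = x*(y*x) = n(x) y`. -/
theorem symmetric_composition_iff
    (F : Type*) [Field F] (S : Type*) [AddCommGroup S] [Module F S]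
    (mul : S →ₗ[F] S →ₗ[F] S) (n : QuadraticForm F S)
    (hmult : ∀ x y : S, n (mul x y) = n x * n y)
    (hns : ∀ x : S, (∀ y : S, QuadraticMap.polar n x y = 0) → n x = 0 → x = 0) :
    (∀ x y z : S, QuadraticMap.polar n (mul x y) z = QuadraticMap.polar n x (mul y z)) ↔
    (∀ x y : S, mul (mul x y) x = n x • y ∧ mul x (mul y x) = n x • y) := by
  -- polarization of multiplicativity in the second variable
  have hC : ∀ x y z : S, QuadraticMap.polar n (mul x y) (mul x z)
      = n x * QuadraticMap.polar n y z := by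
    intro x y z
    simp only [QuadraticMap.polar, ← map_add, hmult]
    ring
  -- polarization of multiplicativity in the first variable
  have hD : ∀ x y z : S, QuadraticMap.polar n (mul x z) (mul y z)
      = QuadraticMap.polar n x y * n z := by
    intro x y z
    have e : mul x z + mul y z = mul (x + y) z := by
      rw [map_add, LinearMap.add_apply]
    simp only [QuadraticMap.polar, e, hmult]
    ring
  -- norm of a difference
  have nsub : ∀ u v : S, n (u - v) = n u + n v - QuadraticMap.polar n u v := by
    intro u v
    rw [sub_eq_add_neg, QuadraticMap.map_add (⇑n) u (-v), QuadraticMap.map_neg,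
      QuadraticMap.polar_neg_right]
    ring
  constructor
  · -- associativity of the polar form implies the flexible laws
    intro h x y
    constructor
    · refine sub_eq_zero.mp (hns (mul (mul x y) x - n x • y) (fun z => ?_) ?_)
      · rw [QuadraticMap.polar_sub_left, h (mul x y) x z, hC x y z,
          QuadraticMap.polar_smul_left, smul_eq_mul, sub_self]
      · rw [nsub, QuadraticMap.map_smul, QuadraticMap.polar_smul_right,
          h (mul x y) x y, QuadraticMap.polar_self]
        simp only [hmult, smul_eq_mul, nsmul_eq_mul]
        push_cast
        ring
    · refine sub_eq_zero.mp (hns (mul x (mul y x) - n x • y) (fun z => ?_) ?_)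
      · have e : QuadraticMap.polar n (mul x (mul y x)) z
            = QuadraticMap.polar n z y * n x := by
          rw [QuadraticMap.polar_comm (⇑n) (mul x (mul y x)) z, ← h z x (mul y x), hD z y x]
        rw [QuadraticMap.polar_sub_left, e, QuadraticMap.polar_smul_left, smul_eq_mul,
          QuadraticMap.polar_comm (⇑n) y z]
        ring
      · rw [nsub, QuadraticMap.map_smul, QuadraticMap.polar_smul_right,
          QuadraticMap.polar_comm (⇑n) (mul x (mul y x)) y, ← h y x (mul y x),
          QuadraticMap.polar_self]
        simp only [hmult, smul_eq_mul, nsmul_eq_mul]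
        push_cast
        ring
  · -- the flexible laws imply associativity of the polar form
    intro h x y z
    by_cases hall : ∀ w : S, n w = 0
    · have hz : ∀ w : S, w = 0 := fun w =>
        hns w (fun v => by simp [QuadraticMap.polar, hall]) (hall w)
      rw [hz (mul x y), hz (mul y z), hz x, hz z]
    · push_neg at hall
      obtain ⟨r, hr⟩ := hall
      -- linearization of `x*(y*x) = n x • y` in `x`
      have hA : ∀ a b c : S, mul a (mul b c) + mul c (mul b a)
          = QuadraticMap.polar n a c • b := by
        intro a b c
        have h1 := (h (a + c) b).2
        simp only [map_add, LinearMap.add_apply] at h1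
        rw [QuadraticMap.map_add (⇑n) a c, add_smul, add_smul, (h a b).2, (h c b).2] at h1
        linear_combination (norm := abel) h1
      -- full linearization of multiplicativity
      have hE : ∀ a b c d : S, QuadraticMap.polar n (mul a b) (mul c d)
          + QuadraticMap.polar n (mul c b) (mul a d)
          = QuadraticMap.polar n a c * QuadraticMap.polar n b d := by
        intro a b c d
        have h1 := hC (a + c) b d
        simp only [map_add, LinearMap.add_apply, QuadraticMap.polar_add_left,
          QuadraticMap.polar_add_right] at h1
        rw [QuadraticMap.map_add (⇑n) a c] at h1
        linear_combination h1 - hC a b d - hC c b d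
      -- the "middle slot" consequence of the flexible law for the anisotropic `r`
      have hDq : ∀ q q' : S, QuadraticMap.polar n (mul q' r) q
          = QuadraticMap.polar n q' (mul r q) := by
        intro q q'
        have h1 := hD q' (mul r q) r
        rw [(h r q).1, QuadraticMap.polar_smul_right, smul_eq_mul] at h1
        exact mul_left_cancel₀ hr (by rw [h1]; ring)
      -- the cyclic symmetry of (x,y,z) ↦ polar n (mul x y) z
      have key : ∀ p q q' : S, QuadraticMap.polar n (mul p q) q'
          = QuadraticMap.polar n (mul q' p) q := by
        intro p q q'
        have e1 := hE p q r (mul q' r)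
        rw [(h r q').2, QuadraticMap.polar_smul_right] at e1
        have ha : mul p (mul q' r) = QuadraticMap.polar n p r • q' - mul r (mul q' p) := by
          rw [eq_sub_iff_add_eq]; exact hA p q' r
        rw [ha, QuadraticMap.polar_sub_right, QuadraticMap.polar_smul_right,
          hC r q (mul q' p)] at e1
        have hB : QuadraticMap.polar n (mul r q) q'
            = QuadraticMap.polar n q (mul q' r) := by
          rw [QuadraticMap.polar_comm (⇑n) (mul r q) q', ← hDq q q',
            QuadraticMap.polar_comm (⇑n) (mul q' r) q]
        rw [hB] at e1
        simp only [smul_eq_mul] at e1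
        have h2 : n r * QuadraticMap.polar n (mul p q) q'
            = n r * QuadraticMap.polar n q (mul q' p) := by linear_combination e1
        exact (mul_left_cancel₀ hr h2).trans (QuadraticMap.polar_comm (⇑n) q (mul q' p))
      rw [QuadraticMap.polar_comm (⇑n) x (mul y z)]
      exact (key y z x).symm
end

section
/- Let F be a field of characteristic not 3 containing a primitive cube root of unity ω. On sl(3,F) (trace-zero 3×3 matrices) define x*y = ωxy − ω²yx − ((ω−ω²)/3)·tr(xy)·1 and n(x) = sr(x). Then n(x*y) = n(x)n(y) for all x, y in sl(3,F). -/
set_option maxHeartbeats 4000000 in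
/-- Let `F` be a field of characteristic not `3` containing a primitive cube root
of unity `ω`.  On trace-zero `3×3` matrices define
`x * y = ω x y − ω² y x − ((ω − ω²)/3) tr(xy) 1` and `n(x) = sr(x)`, the
coefficient of `X` in the characteristic polynomial.  Then `n(x*y) = n(x) n(y)`. -/
theorem okubo_norm_multiplicative
    (F : Type*) [Field F] (hchar : ringChar F ≠ 3)
    (ω : F) (hω3 : ω ^ 3 = 1) (hω1 : ω ≠ 1)
    (x y : Matrix (Fin 3) (Fin 3) F) (hx : x.trace = 0) (hy : y.trace = 0) :
    (ω • (x * y) - ω ^ 2 • (y * x)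
        - (((ω - ω ^ 2) / 3) * (x * y).trace) • (1 : Matrix (Fin 3) (Fin 3) F)).charpoly.coeff 1
      = x.charpoly.coeff 1 * y.charpoly.coeff 1 := by
  have h3 : (3 : F) ≠ 0 := by
    intro h
    have hd : ringChar F ∣ 3 := ringChar.dvd (by exact_mod_cast h)
    rcases (Nat.prime_three.eq_one_or_self_of_dvd _ hd) with h1 | h1
    · exact CharP.ringChar_ne_one h1
    · exact hchar h1
  have h9 : (9 : F) ≠ 0 := by
    have : (9 : F) = 3 * 3 := by norm_num
    rw [this]; exact mul_ne_zero h3 h3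
  have hrel : ω ^ 2 + ω + 1 = 0 := by
    have h0 : (ω - 1) * (ω ^ 2 + ω + 1) = 0 := by linear_combination hω3
    rcases mul_eq_zero.mp h0 with h | h
    · exact absurd (sub_eq_zero.mp h) hω1
    · exact h
  have cp1 : ∀ M : Matrix (Fin 3) (Fin 3) F, M.charpoly.coeff 1
      = M 0 0 * M 1 1 + M 0 0 * M 2 2 + M 1 1 * M 2 2
        - M 0 1 * M 1 0 - M 0 2 * M 2 0 - M 1 2 * M 2 1 := by
    intro M
    rw [Matrix.charpoly, Matrix.det_fin_three]
    simp [Matrix.charmatrix_apply_eq, Matrix.charmatrix_apply_ne]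
    ring_nf
    simp [Polynomial.coeff_add, Polynomial.coeff_sub, Polynomial.coeff_C_mul,
      Polynomial.coeff_X_pow, Polynomial.coeff_one, Polynomial.coeff_C]
    ring
  have hx' : x 0 0 + x 1 1 + x 2 2 = 0 := by
    simpa [Matrix.trace_fin_three] using hx
  have hy' : y 0 0 + y 1 1 + y 2 2 = 0 := by
    simpa [Matrix.trace_fin_three] using hy
  rw [cp1, cp1, cp1]
  simp only [Matrix.sub_apply, Matrix.smul_apply, smul_eq_mul, Matrix.mul_apply,
    Fin.sum_univ_three, Matrix.trace_fin_three, Matrix.one_apply_eq, ne_eq,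
    Matrix.one_apply_ne (by decide : (0 : Fin 3) ≠ 1),
    Matrix.one_apply_ne (by decide : (0 : Fin 3) ≠ 2),
    Matrix.one_apply_ne (by decide : (1 : Fin 3) ≠ 0),
    Matrix.one_apply_ne (by decide : (1 : Fin 3) ≠ 2),
    Matrix.one_apply_ne (by decide : (2 : Fin 3) ≠ 0),
    Matrix.one_apply_ne (by decide : (2 : Fin 3) ≠ 1)]
  set d := (ω - ω ^ 2) / 3 with hdd
  have h3d : 3 * d = ω - ω ^ 2 := by
    rw [hdd]; field_simp
  apply mul_left_cancel₀ h9
  linear_combination (norm := ring1) (- 9*(x 1 2)*(x 2 1)*(y 1 2)*(y 2 1) - 9*(x 1 2)*(x 2 1)*(y 1 1)^2 - 9*(x 1 2)*(x 2 1)*(y 0 2)*(y 2 0) - 9*(x 1 2)*(x 2 1)*(y 0 1)*(y 1 0) - 9*(x 1 2)*(x 2 1)*(y 0 0)*(y 1 1) - 9*(x 1 2)*(x 2 1)*(y 0 0)^2 - 9*(x 1 1)^2*(y 1 2)*(y 2 1) - 9*(x 1 1)^2*(y 1 1)^2 - 9*(x 1 1)^2*(y 0 2)*(y 2 0) - 9*(x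 1 1)^2*(y 0 1)*(y 1 0) - 9*(x 1 1)^2*(y 0 0)*(y 1 1) - 9*(x 1 1)^2*(y 0 0)^2 - 9*(x 0 2)*(x 2 0)*(y 1 2)*(y 2 1) - 9*(x 0 2)*(x 2 0)*(y 1 1)^2 - 9*(x 0 2)*(x 2 0)*(y 0 2)*(y 2 0) - 9*(x 0 2)*(x 2 0)*(y 0 1)*(y 1 0) - 9*(x 0 2)*(x 2 0)*(y 0 0)*(y 1 1) - 9*(x 0 2)*(x 2 0)*(y 0 0)^2 - 9*(x 0 1)*(x 1 0)*(y 1 2)*(y 2 1) - 9*(x 0 1)*(x 1 0)*(y 1 1)^2 - 9*(x 0 1)*(x 1 0)*(y 0 2)*(y 2 0) - 9*(x 0 1)*(x 1 0)*(y 0 1)*(y 1 0) - 9*(x 0 1)*(x 1 0)*(y 0 0)*(y 1 1) - 9*(x 0 1)*(x 1 0)*(y 0 0)^2 - 9*(x 0 0)*(x 1 1)*(y 1 2)*(y 2 1) - 9*(x 0 0)*(x 1 1)*(y 1 1)^2 - 9*(x 0 0)*(x 1 1)*(y 0 2)*(y 2 0) - 9*(x 0 0)*(x 1 1)*(y 0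 1)*(y 1 0) - 9*(x 0 0)*(x 1 1)*(y 0 0)*(y 1 1) - 9*(x 0 0)*(x 1 1)*(y 0 0)^2 - 9*(x 0 0)^2*(y 1 2)*(y 2 1) - 9*(x 0 0)^2*(y 1 1)^2 - 9*(x 0 0)^2*(y 0 2)*(y 2 0) - 9*(x 0 0)^2*(y 0 1)*(y 1 0) - 9*(x 0 0)^2*(y 0 0)*(y 1 1) - 9*(x 0 0)^2*(y 0 0)^2 + 9*ω*(x 1 2)*(x 2 1)*(y 1 2)*(y 2 1) + 9*ω*(x 1 2)*(x 2 1)*(y 1 1)^2 + 9*ω*(x 1 2)*(x 2 1)*(y 0 2)*(y 2 0) + 9*ω*(x 1 2)*(x 2 1)*(y 0 1)*(y 1 0) + 9*ω*(x 1 2)*(x 2 1)*(y 0 0)*(y 1 1) + 9*ω*(x 1 2)*(x 2 1)*(y 0 0)^2 + 9*ω*(x 1 1)^2*(y 1 2)*(y 2 1) + 9*ω*(x 1 1)^2*(y 1 1)^2 + 9*ω*(x 1 1)^2*(y 0 2)*(y 2 0) + 9*ω*(x 1 1)^2*(y 0 1)*(y 1 0) + 9*ω*(x 1 1)^2*(y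 0 0)*(y 1 1) + 9*ω*(x 1 1)^2*(y 0 0)^2 + 9*ω*(x 0 2)*(x 2 0)*(y 1 2)*(y 2 1) + 9*ω*(x 0 2)*(x 2 0)*(y 1 1)^2 + 9*ω*(x 0 2)*(x 2 0)*(y 0 2)*(y 2 0) + 9*ω*(x 0 2)*(x 2 0)*(y 0 1)*(y 1 0) + 9*ω*(x 0 2)*(x 2 0)*(y 0 0)*(y 1 1) + 9*ω*(x 0 2)*(x 2 0)*(y 0 0)^2 + 9*ω*(x 0 1)*(x 1 0)*(y 1 2)*(y 2 1) + 9*ω*(x 0 1)*(x 1 0)*(y 1 1)^2 + 9*ω*(x 0 1)*(x 1 0)*(y 0 2)*(y 2 0) + 9*ω*(x 0 1)*(x 1 0)*(y 0 1)*(y 1 0) + 9*ω*(x 0 1)*(x 1 0)*(y 0 0)*(y 1 1) + 9*ω*(x 0 1)*(x 1 0)*(y 0 0)^2 + 9*ω*(x 0 0)*(x 1 1)*(y 1 2)*(y 2 1) + 9*ω*(x 0 0)*(x 1 1)*(y 1 1)^2 + 9*ω*(x 0 0)*(x 1 1)*(y 0 2)*(y 2 0) + 9*ω*(x 0 0)*(x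 1 1)*(y 0 1)*(y 1 0) + 9*ω*(x 0 0)*(x 1 1)*(y 0 0)*(y 1 1) + 9*ω*(x 0 0)*(x 1 1)*(y 0 0)^2 + 9*ω*(x 0 0)^2*(y 1 2)*(y 2 1) + 9*ω*(x 0 0)^2*(y 1 1)^2 + 9*ω*(x 0 0)^2*(y 0 2)*(y 2 0) + 9*ω*(x 0 0)^2*(y 0 1)*(y 1 0) + 9*ω*(x 0 0)^2*(y 0 0)*(y 1 1) + 9*ω*(x 0 0)^2*(y 0 0)^2 - 3*ω^2*(x 2 1)^2*(y 1 2)^2 - 6*ω^2*(x 2 0)*(x 2 1)*(y 0 2)*(y 1 2) - 3*ω^2*(x 2 0)^2*(y 0 2)^2 + 3*ω^2*(x 1 2)*(x 2 1)*(y 1 2)*(y 2 1) + 9*ω^2*(x 1 2)*(x 2 1)*(y 1 1)^2 + 9*ω^2*(x 1 2)*(x 2 1)*(y 0 0)*(y 1 1) + 3*ω^2*(x 1 2)*(x 2 0)*(y 0 2)*(y 2 1) + 9*ω^2*(x 1 2)*(x 2 0)*(y 0 1)*(y 1 1) + 9*ω^2*(x 1 2)*(x 2 0)*(y 0 0)*(y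 0 1) - 3*ω^2*(x 1 2)^2*(y 2 1)^2 - 12*ω^2*(x 1 1)*(x 2 1)*(y 1 1)*(y 1 2) - 6*ω^2*(x 1 1)*(x 2 1)*(y 0 0)*(y 1 2) - 3*ω^2*(x 1 1)*(x 2 0)*(y 0 2)*(y 1 1) - 9*ω^2*(x 1 1)*(x 2 0)*(y 0 1)*(y 1 2) - 6*ω^2*(x 1 1)*(x 2 0)*(y 0 0)*(y 0 2) - 12*ω^2*(x 1 1)*(x 1 2)*(y 1 1)*(y 2 1) - 6*ω^2*(x 1 1)*(x 1 2)*(y 0 0)*(y 2 1) + 9*ω^2*(x 1 1)^2*(y 1 2)*(y 2 1) - 3*ω^2*(x 1 1)^2*(y 1 1)^2 - 3*ω^2*(x 1 1)^2*(y 0 0)*(y 1 1) - 3*ω^2*(x 1 1)^2*(y 0 0)^2 - 9*ω^2*(x 1 0)*(x 2 1)*(y 0 2)*(y 1 1) + 3*ω^2*(x 1 0)*(x 2 1)*(y 0 1)*(y 1 2) - 6*ω^2*(x 1 0)*(x 2 0)*(y 0 1)*(y 0 2) - 6*ω^2*(x 1 0)*(x 1 2)*(y 0 1)*(y 2 1)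 + 9*ω^2*(x 1 0)*(x 1 1)*(y 0 2)*(y 2 1) - 3*ω^2*(x 1 0)*(x 1 1)*(y 0 1)*(y 1 1) + 3*ω^2*(x 1 0)*(x 1 1)*(y 0 0)*(y 0 1) - 3*ω^2*(x 1 0)^2*(y 0 1)^2 + 3*ω^2*(x 0 2)*(x 2 1)*(y 1 2)*(y 2 0) + 9*ω^2*(x 0 2)*(x 2 1)*(y 1 0)*(y 1 1) + 9*ω^2*(x 0 2)*(x 2 1)*(y 0 0)*(y 1 0) + 3*ω^2*(x 0 2)*(x 2 0)*(y 0 2)*(y 2 0) + 9*ω^2*(x 0 2)*(x 2 0)*(y 0 0)*(y 1 1) + 9*ω^2*(x 0 2)*(x 2 0)*(y 0 0)^2 - 6*ω^2*(x 0 2)*(x 1 2)*(y 2 0)*(y 2 1) - 3*ω^2*(x 0 2)*(x 1 1)*(y 1 1)*(y 2 0) - 9*ω^2*(x 0 2)*(x 1 1)*(y 1 0)*(y 2 1) - 6*ω^2*(x 0 2)*(x 1 1)*(y 0 0)*(y 2 0) + 3*ω^2*(x 0 2)*(x 1 0)*(y 0 1)*(y 2 0) - 9*ω^2*(x 0 2)*(x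 1 0)*(y 0 0)*(y 2 1) - 3*ω^2*(x 0 2)^2*(y 2 0)^2 - 6*ω^2*(x 0 1)*(x 2 1)*(y 1 0)*(y 1 2) + 3*ω^2*(x 0 1)*(x 2 0)*(y 0 2)*(y 1 0) - 9*ω^2*(x 0 1)*(x 2 0)*(y 0 0)*(y 1 2) - 9*ω^2*(x 0 1)*(x 1 2)*(y 1 1)*(y 2 0) + 3*ω^2*(x 0 1)*(x 1 2)*(y 1 0)*(y 2 1) + 9*ω^2*(x 0 1)*(x 1 1)*(y 1 2)*(y 2 0) - 3*ω^2*(x 0 1)*(x 1 1)*(y 1 0)*(y 1 1) + 3*ω^2*(x 0 1)*(x 1 1)*(y 0 0)*(y 1 0) + 3*ω^2*(x 0 1)*(x 1 0)*(y 0 1)*(y 1 0) - 9*ω^2*(x 0 1)*(x 1 0)*(y 0 0)*(y 1 1) - 6*ω^2*(x 0 1)*(x 0 2)*(y 1 0)*(y 2 0) - 3*ω^2*(x 0 1)^2*(y 1 0)^2 - 6*ω^2*(x 0 0)*(x 2 1)*(y 1 1)*(y 1 2) - 9*ω^2*(x 0 0)*(x 2 1)*(y 0 2)*(y 1 0) -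 3*ω^2*(x 0 0)*(x 2 1)*(y 0 0)*(y 1 2) - 6*ω^2*(x 0 0)*(x 2 0)*(y 0 2)*(y 1 1) - 12*ω^2*(x 0 0)*(x 2 0)*(y 0 0)*(y 0 2) - 6*ω^2*(x 0 0)*(x 1 2)*(y 1 1)*(y 2 1) - 9*ω^2*(x 0 0)*(x 1 2)*(y 0 1)*(y 2 0) - 3*ω^2*(x 0 0)*(x 1 2)*(y 0 0)*(y 2 1) + 9*ω^2*(x 0 0)*(x 1 1)*(y 1 2)*(y 2 1) - 3*ω^2*(x 0 0)*(x 1 1)*(y 1 1)^2 + 9*ω^2*(x 0 0)*(x 1 1)*(y 0 2)*(y 2 0) - 9*ω^2*(x 0 0)*(x 1 1)*(y 0 1)*(y 1 0) - 3*ω^2*(x 0 0)*(x 1 1)*(y 0 0)*(y 1 1) - 3*ω^2*(x 0 0)*(x 1 1)*(y 0 0)^2 + 9*ω^2*(x 0 0)*(x 1 0)*(y 0 2)*(y 2 1) + 3*ω^2*(x 0 0)*(x 1 0)*(y 0 1)*(y 1 1) - 3*ω^2*(x 0 0)*(x 1 0)*(y 0 0)*(y 0 1) - 6*ω^2*(x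 0 0)*(x 0 2)*(y 1 1)*(y 2 0) - 12*ω^2*(x 0 0)*(x 0 2)*(y 0 0)*(y 2 0) + 9*ω^2*(x 0 0)*(x 0 1)*(y 1 2)*(y 2 0) + 3*ω^2*(x 0 0)*(x 0 1)*(y 1 0)*(y 1 1) - 3*ω^2*(x 0 0)*(x 0 1)*(y 0 0)*(y 1 0) - 3*ω^2*(x 0 0)^2*(y 1 1)^2 + 9*ω^2*(x 0 0)^2*(y 0 2)*(y 2 0) - 3*ω^2*(x 0 0)^2*(y 0 0)*(y 1 1) - 3*ω^2*(x 0 0)^2*(y 0 0)^2) * hrel + (9*d*(x 2 1)^2*(y 1 2)^2 + 18*d*(x 2 0)*(x 2 1)*(y 0 2)*(y 1 2) + 9*d*(x 2 0)^2*(y 0 2)^2 + 18*d*(x 1 2)*(x 2 1)*(y 1 2)*(y 2 1) + 18*d*(x 1 2)*(x 2 0)*(y 0 2)*(y 2 1) + 9*d*(x 1 2)^2*(y 2 1)^2 + 36*d*(x 1 1)*(x 2 1)*(y 1 1)*(y 1 2) + 18*d*(x 1 1)*(x 2 1)*(y 0 0)*(y 1 2) + 36*d*(x 1 1)*(x 2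 0)*(y 0 2)*(y 1 1) + 18*d*(x 1 1)*(x 2 0)*(y 0 0)*(y 0 2) + 36*d*(x 1 1)*(x 1 2)*(y 1 1)*(y 2 1) + 18*d*(x 1 1)*(x 1 2)*(y 0 0)*(y 2 1) + 36*d*(x 1 1)^2*(y 1 1)^2 + 36*d*(x 1 1)^2*(y 0 0)*(y 1 1) + 9*d*(x 1 1)^2*(y 0 0)^2 + 18*d*(x 1 0)*(x 2 1)*(y 0 1)*(y 1 2) + 18*d*(x 1 0)*(x 2 0)*(y 0 1)*(y 0 2) + 18*d*(x 1 0)*(x 1 2)*(y 0 1)*(y 2 1) + 36*d*(x 1 0)*(x 1 1)*(y 0 1)*(y 1 1) + 18*d*(x 1 0)*(x 1 1)*(y 0 0)*(y 0 1) + 9*d*(x 1 0)^2*(y 0 1)^2 + 18*d*(x 0 2)*(x 2 1)*(y 1 2)*(y 2 0) + 18*d*(x 0 2)*(x 2 0)*(y 0 2)*(y 2 0) + 18*d*(x 0 2)*(x 1 2)*(y 2 0)*(y 2 1) + 36*d*(x 0 2)*(x 1 1)*(y 1 1)*(y 2 0) + 18*d*(x 0 2)*(x 1 1)*(y 0 0)*(y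 2 0) + 18*d*(x 0 2)*(x 1 0)*(y 0 1)*(y 2 0) + 9*d*(x 0 2)^2*(y 2 0)^2 + 18*d*(x 0 1)*(x 2 1)*(y 1 0)*(y 1 2) + 18*d*(x 0 1)*(x 2 0)*(y 0 2)*(y 1 0) + 18*d*(x 0 1)*(x 1 2)*(y 1 0)*(y 2 1) + 36*d*(x 0 1)*(x 1 1)*(y 1 0)*(y 1 1) + 18*d*(x 0 1)*(x 1 1)*(y 0 0)*(y 1 0) + 18*d*(x 0 1)*(x 1 0)*(y 0 1)*(y 1 0) + 18*d*(x 0 1)*(x 0 2)*(y 1 0)*(y 2 0) + 9*d*(x 0 1)^2*(y 1 0)^2 + 18*d*(x 0 0)*(x 2 1)*(y 1 1)*(y 1 2) + 36*d*(x 0 0)*(x 2 1)*(y 0 0)*(y 1 2) + 18*d*(x 0 0)*(x 2 0)*(y 0 2)*(y 1 1) + 36*d*(x 0 0)*(x 2 0)*(y 0 0)*(y 0 2) + 18*d*(x 0 0)*(x 1 2)*(y 1 1)*(y 2 1) + 36*d*(x 0 0)*(x 1 2)*(y 0 0)*(y 2 1) + 36*d*(x 0 0)*(x 1 1)*(y 1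 1)^2 + 90*d*(x 0 0)*(x 1 1)*(y 0 0)*(y 1 1) + 36*d*(x 0 0)*(x 1 1)*(y 0 0)^2 + 18*d*(x 0 0)*(x 1 0)*(y 0 1)*(y 1 1) + 36*d*(x 0 0)*(x 1 0)*(y 0 0)*(y 0 1) + 18*d*(x 0 0)*(x 0 2)*(y 1 1)*(y 2 0) + 36*d*(x 0 0)*(x 0 2)*(y 0 0)*(y 2 0) + 18*d*(x 0 0)*(x 0 1)*(y 1 0)*(y 1 1) + 36*d*(x 0 0)*(x 0 1)*(y 0 0)*(y 1 0) + 9*d*(x 0 0)^2*(y 1 1)^2 + 36*d*(x 0 0)^2*(y 0 0)*(y 1 1) + 36*d*(x 0 0)^2*(y 0 0)^2 - 3*ω*(x 2 1)^2*(y 1 2)^2 - 6*ω*(x 2 0)*(x 2 1)*(y 0 2)*(y 1 2) - 3*ω*(x 2 0)^2*(y 0 2)^2 - 6*ω*(x 1 2)*(x 2 1)*(y 1 2)*(y 2 1) - 6*ω*(x 1 2)*(x 2 0)*(y 0 2)*(y 2 1) - 3*ω*(x 1 2)^2*(y 2 1)^2 - 12*ω*(x 1 1)*(x 2 1)*(y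 1 1)*(y 1 2) - 6*ω*(x 1 1)*(x 2 1)*(y 0 0)*(y 1 2) - 12*ω*(x 1 1)*(x 2 0)*(y 0 2)*(y 1 1) - 6*ω*(x 1 1)*(x 2 0)*(y 0 0)*(y 0 2) - 12*ω*(x 1 1)*(x 1 2)*(y 1 1)*(y 2 1) - 6*ω*(x 1 1)*(x 1 2)*(y 0 0)*(y 2 1) - 12*ω*(x 1 1)^2*(y 1 1)^2 - 12*ω*(x 1 1)^2*(y 0 0)*(y 1 1) - 3*ω*(x 1 1)^2*(y 0 0)^2 - 6*ω*(x 1 0)*(x 2 1)*(y 0 1)*(y 1 2) - 6*ω*(x 1 0)*(x 2 0)*(y 0 1)*(y 0 2) - 6*ω*(x 1 0)*(x 1 2)*(y 0 1)*(y 2 1) - 12*ω*(x 1 0)*(x 1 1)*(y 0 1)*(y 1 1) - 6*ω*(x 1 0)*(x 1 1)*(y 0 0)*(y 0 1) - 3*ω*(x 1 0)^2*(y 0 1)^2 - 6*ω*(x 0 2)*(x 2 1)*(y 1 2)*(y 2 0) - 6*ω*(x 0 2)*(x 2 0)*(y 0 2)*(y 2 0) - 6*ω*(x 0 2)*(x 1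 2)*(y 2 0)*(y 2 1) - 12*ω*(x 0 2)*(x 1 1)*(y 1 1)*(y 2 0) - 6*ω*(x 0 2)*(x 1 1)*(y 0 0)*(y 2 0) - 6*ω*(x 0 2)*(x 1 0)*(y 0 1)*(y 2 0) - 3*ω*(x 0 2)^2*(y 2 0)^2 - 6*ω*(x 0 1)*(x 2 1)*(y 1 0)*(y 1 2) - 6*ω*(x 0 1)*(x 2 0)*(y 0 2)*(y 1 0) - 6*ω*(x 0 1)*(x 1 2)*(y 1 0)*(y 2 1) - 12*ω*(x 0 1)*(x 1 1)*(y 1 0)*(y 1 1) - 6*ω*(x 0 1)*(x 1 1)*(y 0 0)*(y 1 0) - 6*ω*(x 0 1)*(x 1 0)*(y 0 1)*(y 1 0) - 6*ω*(x 0 1)*(x 0 2)*(y 1 0)*(y 2 0) - 3*ω*(x 0 1)^2*(y 1 0)^2 - 6*ω*(x 0 0)*(x 2 1)*(y 1 1)*(y 1 2) - 12*ω*(x 0 0)*(x 2 1)*(y 0 0)*(y 1 2) - 6*ω*(x 0 0)*(x 2 0)*(y 0 2)*(y 1 1) - 12*ω*(x 0 0)*(x 2 0)*(y 0 0)*(y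 0 2) - 6*ω*(x 0 0)*(x 1 2)*(y 1 1)*(y 2 1) - 12*ω*(x 0 0)*(x 1 2)*(y 0 0)*(y 2 1) - 12*ω*(x 0 0)*(x 1 1)*(y 1 1)^2 - 30*ω*(x 0 0)*(x 1 1)*(y 0 0)*(y 1 1) - 12*ω*(x 0 0)*(x 1 1)*(y 0 0)^2 - 6*ω*(x 0 0)*(x 1 0)*(y 0 1)*(y 1 1) - 12*ω*(x 0 0)*(x 1 0)*(y 0 0)*(y 0 1) - 6*ω*(x 0 0)*(x 0 2)*(y 1 1)*(y 2 0) - 12*ω*(x 0 0)*(x 0 2)*(y 0 0)*(y 2 0) - 6*ω*(x 0 0)*(x 0 1)*(y 1 0)*(y 1 1) - 12*ω*(x 0 0)*(x 0 1)*(y 0 0)*(y 1 0) - 3*ω*(x 0 0)^2*(y 1 1)^2 - 12*ω*(x 0 0)^2*(y 0 0)*(y 1 1) - 12*ω*(x 0 0)^2*(y 0 0)^2 + 3*ω^2*(x 2 1)^2*(y 1 2)^2 + 6*ω^2*(x 2 0)*(x 2 1)*(y 0 2)*(y 1 2) + 3*ω^2*(x 2 0)^2*(y 0 2)^2 + 6*ω^2*(x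 1 2)*(x 2 1)*(y 1 2)*(y 2 1) + 6*ω^2*(x 1 2)*(x 2 0)*(y 0 2)*(y 2 1) + 3*ω^2*(x 1 2)^2*(y 2 1)^2 + 12*ω^2*(x 1 1)*(x 2 1)*(y 1 1)*(y 1 2) + 6*ω^2*(x 1 1)*(x 2 1)*(y 0 0)*(y 1 2) + 12*ω^2*(x 1 1)*(x 2 0)*(y 0 2)*(y 1 1) + 6*ω^2*(x 1 1)*(x 2 0)*(y 0 0)*(y 0 2) + 12*ω^2*(x 1 1)*(x 1 2)*(y 1 1)*(y 2 1) + 6*ω^2*(x 1 1)*(x 1 2)*(y 0 0)*(y 2 1) + 12*ω^2*(x 1 1)^2*(y 1 1)^2 + 12*ω^2*(x 1 1)^2*(y 0 0)*(y 1 1) + 3*ω^2*(x 1 1)^2*(y 0 0)^2 + 6*ω^2*(x 1 0)*(x 2 1)*(y 0 1)*(y 1 2) + 6*ω^2*(x 1 0)*(x 2 0)*(y 0 1)*(y 0 2) + 6*ω^2*(x 1 0)*(x 1 2)*(y 0 1)*(y 2 1) + 12*ω^2*(x 1 0)*(x 1 1)*(y 0 1)*(y 1 1) + 6*ω^2*(x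 1 0)*(x 1 1)*(y 0 0)*(y 0 1) + 3*ω^2*(x 1 0)^2*(y 0 1)^2 + 6*ω^2*(x 0 2)*(x 2 1)*(y 1 2)*(y 2 0) + 6*ω^2*(x 0 2)*(x 2 0)*(y 0 2)*(y 2 0) + 6*ω^2*(x 0 2)*(x 1 2)*(y 2 0)*(y 2 1) + 12*ω^2*(x 0 2)*(x 1 1)*(y 1 1)*(y 2 0) + 6*ω^2*(x 0 2)*(x 1 1)*(y 0 0)*(y 2 0) + 6*ω^2*(x 0 2)*(x 1 0)*(y 0 1)*(y 2 0) + 3*ω^2*(x 0 2)^2*(y 2 0)^2 + 6*ω^2*(x 0 1)*(x 2 1)*(y 1 0)*(y 1 2) + 6*ω^2*(x 0 1)*(x 2 0)*(y 0 2)*(y 1 0) + 6*ω^2*(x 0 1)*(x 1 2)*(y 1 0)*(y 2 1) + 12*ω^2*(x 0 1)*(x 1 1)*(y 1 0)*(y 1 1) + 6*ω^2*(x 0 1)*(x 1 1)*(y 0 0)*(y 1 0) + 6*ω^2*(x 0 1)*(x 1 0)*(y 0 1)*(y 1 0) + 6*ω^2*(x 0 1)*(x 0 2)*(y 1 0)*(y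 2 0) + 3*ω^2*(x 0 1)^2*(y 1 0)^2 + 6*ω^2*(x 0 0)*(x 2 1)*(y 1 1)*(y 1 2) + 12*ω^2*(x 0 0)*(x 2 1)*(y 0 0)*(y 1 2) + 6*ω^2*(x 0 0)*(x 2 0)*(y 0 2)*(y 1 1) + 12*ω^2*(x 0 0)*(x 2 0)*(y 0 0)*(y 0 2) + 6*ω^2*(x 0 0)*(x 1 2)*(y 1 1)*(y 2 1) + 12*ω^2*(x 0 0)*(x 1 2)*(y 0 0)*(y 2 1) + 12*ω^2*(x 0 0)*(x 1 1)*(y 1 1)^2 + 30*ω^2*(x 0 0)*(x 1 1)*(y 0 0)*(y 1 1) + 12*ω^2*(x 0 0)*(x 1 1)*(y 0 0)^2 + 6*ω^2*(x 0 0)*(x 1 0)*(y 0 1)*(y 1 1) + 12*ω^2*(x 0 0)*(x 1 0)*(y 0 0)*(y 0 1) + 6*ω^2*(x 0 0)*(x 0 2)*(y 1 1)*(y 2 0) + 12*ω^2*(x 0 0)*(x 0 2)*(y 0 0)*(y 2 0) + 6*ω^2*(x 0 0)*(x 0 1)*(y 1 0)*(y 1 1) + 12*ω^2*(x 0 0)*(x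 0 1)*(y 0 0)*(y 1 0) + 3*ω^2*(x 0 0)^2*(y 1 1)^2 + 12*ω^2*(x 0 0)^2*(y 0 0)*(y 1 1) + 12*ω^2*(x 0 0)^2*(y 0 0)^2) * h3d + (9*(x 1 1)*(y 1 2)*(y 2 1) - 9*(x 1 1)*(y 1 1)*(y 2 2) + 9*(x 1 1)*(y 0 2)*(y 2 0) + 9*(x 1 1)*(y 0 1)*(y 1 0) - 9*(x 1 1)*(y 0 0)*(y 2 2) - 9*(x 1 1)*(y 0 0)*(y 1 1) + 9*(x 0 0)*(y 1 2)*(y 2 1) - 9*(x 0 0)*(y 1 1)*(y 2 2) + 9*(x 0 0)*(y 0 2)*(y 2 0) + 9*(x 0 0)*(y 0 1)*(y 1 0) - 9*(x 0 0)*(y 0 0)*(y 2 2) - 9*(x 0 0)*(y 0 0)*(y 1 1) + 27*d^2*(x 2 2)*(y 2 2)^2 + 54*d^2*(x 2 1)*(y 1 2)*(y 2 2) + 54*d^2*(x 2 0)*(y 0 2)*(y 2 2) + 54*d^2*(x 1 2)*(y 2 1)*(y 2 2) - 27*d^2*(x 1 1)*(y 2 2)^2 + 54*d^2*(x 1 1)*(y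 1 1)*(y 2 2) + 54*d^2*(x 1 0)*(y 0 1)*(y 2 2) + 54*d^2*(x 0 2)*(y 2 0)*(y 2 2) + 54*d^2*(x 0 1)*(y 1 0)*(y 2 2) - 27*d^2*(x 0 0)*(y 2 2)^2 + 54*d^2*(x 0 0)*(y 0 0)*(y 2 2) - 18*ω*d*(x 2 2)*(y 2 2)^2 - 36*ω*d*(x 2 1)*(y 1 2)*(y 2 2) - 36*ω*d*(x 2 0)*(y 0 2)*(y 2 2) - 36*ω*d*(x 1 2)*(y 2 1)*(y 2 2) + 18*ω*d*(x 1 1)*(y 2 2)^2 - 36*ω*d*(x 1 1)*(y 1 1)*(y 2 2) - 36*ω*d*(x 1 0)*(y 0 1)*(y 2 2) - 36*ω*d*(x 0 2)*(y 2 0)*(y 2 2) - 36*ω*d*(x 0 1)*(y 1 0)*(y 2 2) + 18*ω*d*(x 0 0)*(y 2 2)^2 - 36*ω*d*(x 0 0)*(y 0 0)*(y 2 2) - 9*ω^2*(x 1 1)*(y 1 2)*(y 2 1) + 9*ω^2*(x 1 1)*(y 1 1)*(y 2 2) - 9*ω^2*(x 1 0)*(y 0 2)*(y 2 1) + 9*ω^2*(x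 1 0)*(y 0 1)*(y 2 2) - 9*ω^2*(x 0 1)*(y 1 2)*(y 2 0) + 9*ω^2*(x 0 1)*(y 1 0)*(y 2 2) - 9*ω^2*(x 0 0)*(y 0 2)*(y 2 0) + 9*ω^2*(x 0 0)*(y 0 0)*(y 2 2) + 18*ω^2*d*(x 2 2)*(y 2 2)^2 + 36*ω^2*d*(x 2 1)*(y 1 2)*(y 2 2) + 36*ω^2*d*(x 2 0)*(y 0 2)*(y 2 2) + 36*ω^2*d*(x 1 2)*(y 2 1)*(y 2 2) - 18*ω^2*d*(x 1 1)*(y 2 2)^2 + 36*ω^2*d*(x 1 1)*(y 1 1)*(y 2 2) + 36*ω^2*d*(x 1 0)*(y 0 1)*(y 2 2) + 36*ω^2*d*(x 0 2)*(y 2 0)*(y 2 2) + 36*ω^2*d*(x 0 1)*(y 1 0)*(y 2 2) - 18*ω^2*d*(x 0 0)*(y 2 2)^2 + 36*ω^2*d*(x 0 0)*(y 0 0)*(y 2 2) + 9*ω^3*(x 2 2)*(y 1 2)*(y 2 1) + 9*ω^3*(x 2 2)*(y 0 2)*(y 2 0) - 9*ω^3*(x 2 1)*(y 1 2)*(y 2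 2) + 9*ω^3*(x 2 1)*(y 1 1)*(y 1 2) + 9*ω^3*(x 2 1)*(y 0 2)*(y 1 0) - 9*ω^3*(x 2 0)*(y 0 2)*(y 2 2) + 9*ω^3*(x 2 0)*(y 0 1)*(y 1 2) + 9*ω^3*(x 2 0)*(y 0 0)*(y 0 2) - 9*ω^3*(x 1 2)*(y 2 1)*(y 2 2) + 9*ω^3*(x 1 2)*(y 1 1)*(y 2 1) + 9*ω^3*(x 1 2)*(y 0 1)*(y 2 0) - 9*ω^3*(x 1 1)*(y 1 2)*(y 2 1) - 18*ω^3*(x 1 1)*(y 1 1)*(y 2 2) - 9*ω^3*(x 1 1)*(y 0 2)*(y 2 0) - 18*ω^3*(x 1 0)*(y 0 1)*(y 2 2) - 9*ω^3*(x 0 2)*(y 2 0)*(y 2 2) + 9*ω^3*(x 0 2)*(y 1 0)*(y 2 1) + 9*ω^3*(x 0 2)*(y 0 0)*(y 2 0) - 18*ω^3*(x 0 1)*(y 1 0)*(y 2 2) - 9*ω^3*(x 0 0)*(y 1 2)*(y 2 1) - 9*ω^3*(x 0 0)*(y 0 2)*(y 2 0) - 18*ω^3*(x 0 0)*(y 0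 0)*(y 2 2) - 9*ω^4*(x 1 1)*(y 1 2)*(y 2 1) + 9*ω^4*(x 1 1)*(y 1 1)*(y 2 2) - 9*ω^4*(x 1 0)*(y 0 2)*(y 2 1) + 9*ω^4*(x 1 0)*(y 0 1)*(y 2 2) - 9*ω^4*(x 0 1)*(y 1 2)*(y 2 0) + 9*ω^4*(x 0 1)*(y 1 0)*(y 2 2) - 9*ω^4*(x 0 0)*(y 0 2)*(y 2 0) + 9*ω^4*(x 0 0)*(y 0 0)*(y 2 2)) * hx' + (9*(x 1 2)*(x 2 1)*(y 1 1) + 9*(x 1 2)*(x 2 1)*(y 0 0) + 9*(x 1 1)^2*(y 1 1) + 9*(x 1 1)^2*(y 0 0) + 9*(x 0 2)*(x 2 0)*(y 1 1) + 9*(x 0 2)*(x 2 0)*(y 0 0) + 9*(x 0 1)*(x 1 0)*(y 1 1) + 9*(x 0 1)*(x 1 0)*(y 0 0) + 9*(x 0 0)*(x 1 1)*(y 1 1) + 9*(x 0 0)*(x 1 1)*(y 0 0) + 9*(x 0 0)^2*(y 1 1) + 9*(x 0 0)^2*(y 0 0) - 54*d^2*(x 1 1)*(x 2 1)*(y 1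 2) - 54*d^2*(x 1 1)*(x 2 0)*(y 0 2) - 54*d^2*(x 1 1)*(x 1 2)*(y 2 1) + 27*d^2*(x 1 1)^2*(y 2 2) - 81*d^2*(x 1 1)^2*(y 1 1) - 27*d^2*(x 1 1)^2*(y 0 0) - 54*d^2*(x 1 0)*(x 1 1)*(y 0 1) - 54*d^2*(x 0 2)*(x 1 1)*(y 2 0) - 54*d^2*(x 0 1)*(x 1 1)*(y 1 0) - 54*d^2*(x 0 0)*(x 2 1)*(y 1 2) - 54*d^2*(x 0 0)*(x 2 0)*(y 0 2) - 54*d^2*(x 0 0)*(x 1 2)*(y 2 1) + 54*d^2*(x 0 0)*(x 1 1)*(y 2 2) - 108*d^2*(x 0 0)*(x 1 1)*(y 1 1) - 108*d^2*(x 0 0)*(x 1 1)*(y 0 0) - 54*d^2*(x 0 0)*(x 1 0)*(y 0 1) - 54*d^2*(x 0 0)*(x 0 2)*(y 2 0) - 54*d^2*(x 0 0)*(x 0 1)*(y 1 0) + 27*d^2*(x 0 0)^2*(y 2 2) - 27*d^2*(x 0 0)^2*(y 1 1) - 81*d^2*(x 0 0)^2*(y 0 0) + 36*ω*d*(x 1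 1)*(x 2 1)*(y 1 2) + 36*ω*d*(x 1 1)*(x 2 0)*(y 0 2) + 36*ω*d*(x 1 1)*(x 1 2)*(y 2 1) - 18*ω*d*(x 1 1)^2*(y 2 2) + 54*ω*d*(x 1 1)^2*(y 1 1) + 18*ω*d*(x 1 1)^2*(y 0 0) + 36*ω*d*(x 1 0)*(x 1 1)*(y 0 1) + 36*ω*d*(x 0 2)*(x 1 1)*(y 2 0) + 36*ω*d*(x 0 1)*(x 1 1)*(y 1 0) + 36*ω*d*(x 0 0)*(x 2 1)*(y 1 2) + 36*ω*d*(x 0 0)*(x 2 0)*(y 0 2) + 36*ω*d*(x 0 0)*(x 1 2)*(y 2 1) - 36*ω*d*(x 0 0)*(x 1 1)*(y 2 2) + 72*ω*d*(x 0 0)*(x 1 1)*(y 1 1) + 72*ω*d*(x 0 0)*(x 1 1)*(y 0 0) + 36*ω*d*(x 0 0)*(x 1 0)*(y 0 1) + 36*ω*d*(x 0 0)*(x 0 2)*(y 2 0) + 36*ω*d*(x 0 0)*(x 0 1)*(y 1 0) - 18*ω*d*(x 0 0)^2*(y 2 2) + 18*ω*d*(x 0 0)^2*(y 1 1) + 54*ω*d*(x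 0 0)^2*(y 0 0) - 9*ω^2*(x 1 2)*(x 2 1)*(y 1 1) - 9*ω^2*(x 1 2)*(x 2 0)*(y 0 1) - 9*ω^2*(x 1 1)^2*(y 1 1) - 9*ω^2*(x 1 0)*(x 1 1)*(y 0 1) - 9*ω^2*(x 0 2)*(x 2 1)*(y 1 0) - 9*ω^2*(x 0 2)*(x 2 0)*(y 0 0) - 9*ω^2*(x 0 1)*(x 1 1)*(y 1 0) - 9*ω^2*(x 0 0)*(x 1 1)*(y 1 1) - 9*ω^2*(x 0 0)*(x 1 1)*(y 0 0) - 9*ω^2*(x 0 0)*(x 1 0)*(y 0 1) - 9*ω^2*(x 0 0)*(x 0 1)*(y 1 0) - 9*ω^2*(x 0 0)^2*(y 0 0) - 36*ω^2*d*(x 1 1)*(x 2 1)*(y 1 2) - 36*ω^2*d*(x 1 1)*(x 2 0)*(y 0 2) - 36*ω^2*d*(x 1 1)*(x 1 2)*(y 2 1) + 18*ω^2*d*(x 1 1)^2*(y 2 2) - 54*ω^2*d*(x 1 1)^2*(y 1 1) - 18*ω^2*d*(x 1 1)^2*(y 0 0) - 36*ω^2*d*(x 1 0)*(x 1 1)*(y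 0 1) - 36*ω^2*d*(x 0 2)*(x 1 1)*(y 2 0) - 36*ω^2*d*(x 0 1)*(x 1 1)*(y 1 0) - 36*ω^2*d*(x 0 0)*(x 2 1)*(y 1 2) - 36*ω^2*d*(x 0 0)*(x 2 0)*(y 0 2) - 36*ω^2*d*(x 0 0)*(x 1 2)*(y 2 1) + 36*ω^2*d*(x 0 0)*(x 1 1)*(y 2 2) - 72*ω^2*d*(x 0 0)*(x 1 1)*(y 1 1) - 72*ω^2*d*(x 0 0)*(x 1 1)*(y 0 0) - 36*ω^2*d*(x 0 0)*(x 1 0)*(y 0 1) - 36*ω^2*d*(x 0 0)*(x 0 2)*(y 2 0) - 36*ω^2*d*(x 0 0)*(x 0 1)*(y 1 0) + 18*ω^2*d*(x 0 0)^2*(y 2 2) - 18*ω^2*d*(x 0 0)^2*(y 1 1) - 54*ω^2*d*(x 0 0)^2*(y 0 0) + 9*ω^3*(x 1 2)*(x 2 1)*(y 2 2) - 9*ω^3*(x 1 2)*(x 2 1)*(y 1 1) - 9*ω^3*(x 1 2)*(x 2 1)*(y 0 0) + 18*ω^3*(x 1 1)*(x 2 1)*(y 1 2) + 9*ω^3*(x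 1 1)*(x 2 0)*(y 0 2) + 18*ω^3*(x 1 1)*(x 1 2)*(y 2 1) + 18*ω^3*(x 1 1)^2*(y 1 1) + 9*ω^3*(x 1 0)*(x 2 1)*(y 0 2) + 18*ω^3*(x 1 0)*(x 1 1)*(y 0 1) + 9*ω^3*(x 0 2)*(x 2 0)*(y 2 2) - 9*ω^3*(x 0 2)*(x 2 0)*(y 1 1) - 9*ω^3*(x 0 2)*(x 2 0)*(y 0 0) + 9*ω^3*(x 0 2)*(x 1 1)*(y 2 0) + 9*ω^3*(x 0 2)*(x 1 0)*(y 2 1) + 9*ω^3*(x 0 1)*(x 2 0)*(y 1 2) + 9*ω^3*(x 0 1)*(x 1 2)*(y 2 0) + 18*ω^3*(x 0 1)*(x 1 1)*(y 1 0) + 9*ω^3*(x 0 0)*(x 2 1)*(y 1 2) + 18*ω^3*(x 0 0)*(x 2 0)*(y 0 2) + 9*ω^3*(x 0 0)*(x 1 2)*(y 2 1) + 18*ω^3*(x 0 0)*(x 1 1)*(y 1 1) + 18*ω^3*(x 0 0)*(x 1 1)*(y 0 0) + 18*ω^3*(x 0 0)*(x 1 0)*(y 0 1) + 18*ω^3*(x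 0 0)*(x 0 2)*(y 2 0) + 18*ω^3*(x 0 0)*(x 0 1)*(y 1 0) + 18*ω^3*(x 0 0)^2*(y 0 0) - 9*ω^4*(x 1 2)*(x 2 1)*(y 1 1) - 9*ω^4*(x 1 2)*(x 2 0)*(y 0 1) - 9*ω^4*(x 1 1)^2*(y 1 1) - 9*ω^4*(x 1 0)*(x 1 1)*(y 0 1) - 9*ω^4*(x 0 2)*(x 2 1)*(y 1 0) - 9*ω^4*(x 0 2)*(x 2 0)*(y 0 0) - 9*ω^4*(x 0 1)*(x 1 1)*(y 1 0) - 9*ω^4*(x 0 0)*(x 1 1)*(y 1 1) - 9*ω^4*(x 0 0)*(x 1 1)*(y 0 0) - 9*ω^4*(x 0 0)*(x 1 0)*(y 0 1) - 9*ω^4*(x 0 0)*(x 0 1)*(y 1 0) - 9*ω^4*(x 0 0)^2*(y 0 0)) * hy'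
end

section
/- Let F be a field of characteristic not 3 containing a primitive cube root of unity ω, and define on sl(3,F) the product x*y = ωxy − ω²yx − ((ω−ω²)/3)·tr(xy)·1. Then (x*y)*x = x*(y*x) = sr(x)·y for all x, y in sl(3,F). -/
/-!
Expanding the Okubo product with `tr x = 0`, `ω² + ω + 1 = 0` and `(ω − ω²)² = −3`, both
`(x*y)*x` and `x*(y*x)` reduce to `tr(xy)·x + tr(x²y)·1 − (x²y + xyx + yx²)`. For traceless
`x` and `y` this is `sr(x)·y`: it is the derivative at `x` in the direction `y` of the
Cayley–Hamilton identity `x³ + sr(x)·x − det(x)·1 = 0` of a traceless matrix.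
-/

/-- The Okubo product `x * y = ω x y − ω² y x − ((ω − ω²)/3) tr(xy) 1` on `3×3`
matrices over a field `F` with a primitive cube root of unity `ω`. -/
noncomputable def okuboMul (F : Type*) [Field F] (ω : F)
    (x y : Matrix (Fin 3) (Fin 3) F) : Matrix (Fin 3) (Fin 3) F :=
  ω • (x * y) - ω ^ 2 • (y * x)
    - (((ω - ω ^ 2) / 3) * (x * y).trace) • (1 : Matrix (Fin 3) (Fin 3) F)

open Matrix Polynomial

theorem Matrix.charpoly_coeff_one_fin_three {R : Type*} [CommRing R]
    (x : Matrix (Fin 3) (Fin 3) R) :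
    x.charpoly.coeff 1 =
      x 0 0 * x 1 1 - x 0 1 * x 1 0 + x 0 0 * x 2 2 - x 0 2 * x 2 0
        + x 1 1 * x 2 2 - x 1 2 * x 2 1 := by
  simp only [Matrix.charpoly, det_fin_three, charmatrix_apply, diagonal_apply]
  ring_nf
  simp [coeff_X, coeff_C, coeff_X_pow]
  ring

theorem Matrix.charpoly_coeff_one_smul_of_trace_eq_zero {R : Type*} [CommRing R]
    {x y : Matrix (Fin 3) (Fin 3) R} (hx : x.trace = 0) (hy : y.trace = 0) :
    x.charpoly.coeff 1 • y =
      (x * y).trace • x + (x * x * y).trace • 1 - (x * x * y + x * y * x + y * x * x) := by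
  rw [trace_fin_three, add_eq_zero_iff_eq_neg'] at hx hy
  rw [charpoly_coeff_one_fin_three]
  ext i j
  fin_cases i <;> fin_cases j <;>
    simp [mul_apply, trace_fin_three, Fin.sum_univ_three, hx, hy] <;> ring

theorem sq_add_add_one_eq_zero_of_pow_three_eq_one {F : Type*} [Field F] {ω : F}
    (hω3 : ω ^ 3 = 1) (hω1 : ω ≠ 1) : ω ^ 2 + ω + 1 = 0 := by
  have h : (ω - 1) * (ω ^ 2 + ω + 1) = 0 := by linear_combination hω3
  exact (mul_eq_zero.mp h).resolve_left (sub_ne_zero.mpr hω1)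

theorem three_ne_zero_of_sq_add_add_one_eq_zero {F : Type*} [Field F] {ω : F}
    (hω : ω ^ 2 + ω + 1 = 0) (hω1 : ω ≠ 1) : (3 : F) ≠ 0 := by
  intro h3
  have h : (ω - 1) ^ 2 = 0 := by linear_combination hω - ω * h3
  exact hω1 (sub_eq_zero.mp (pow_eq_zero_iff two_ne_zero |>.mp h))

section Okubo

variable {F : Type*} [Field F] {ω : F} {x : Matrix (Fin 3) (Fin 3) F}

theorem okuboMul_okuboMul_self (h3 : (3 : F) ≠ 0) (hω : ω ^ 2 + ω + 1 = 0)
    (hx : x.trace = 0) (y : Matrix (Fin 3) (Fin 3) F) :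
    okuboMul F ω (okuboMul F ω x y) x =
      (x * y).trace • x + (x * x * y).trace • 1 - (x * x * y + x * y * x + y * x * x) := by
  have hxyx : (x * y * x).trace = (x * x * y).trace := trace_mul_cycle x y x
  have hyxx : (y * x * x).trace = (x * x * y).trace := (trace_mul_cycle y x x).trans hxyx
  simp only [okuboMul, sub_mul, mul_sub, smul_mul_assoc, mul_smul_comm, Matrix.one_mul,
    Matrix.mul_one, trace_sub, trace_smul, ← Matrix.mul_assoc, hxyx, hyxx, hx, smul_eq_mul]
  match_scalars <;> grind

theorem okuboMul_self_okuboMul (h3 : (3 : F) ≠ 0) (hω : ω ^ 2 + ω + 1 = 0)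
    (hx : x.trace = 0) (y : Matrix (Fin 3) (Fin 3) F) :
    okuboMul F ω x (okuboMul F ω y x) =
      (x * y).trace • x + (x * x * y).trace • 1 - (x * x * y + x * y * x + y * x * x) := by
  have hxyx : (x * y * x).trace = (x * x * y).trace := trace_mul_cycle x y x
  simp only [okuboMul, sub_mul, mul_sub, smul_mul_assoc, mul_smul_comm, Matrix.one_mul,
    Matrix.mul_one, trace_sub, trace_smul, ← Matrix.mul_assoc, hxyx, hx, smul_eq_mul,
    trace_mul_comm y x]
  match_scalars <;> grind

end Okubo

theorem okubo_flexible_general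
    (F : Type*) [Field F]
    (ω : F) (hω3 : ω ^ 3 = 1) (hω1 : ω ≠ 1)
    (x y : Matrix (Fin 3) (Fin 3) F) (hx : x.trace = 0) (hy : y.trace = 0) :
    okuboMul F ω (okuboMul F ω x y) x = x.charpoly.coeff 1 • y ∧
    okuboMul F ω x (okuboMul F ω y x) = x.charpoly.coeff 1 • y := by
  have hω := sq_add_add_one_eq_zero_of_pow_three_eq_one hω3 hω1
  have h3 := three_ne_zero_of_sq_add_add_one_eq_zero hω hω1
  rw [charpoly_coeff_one_smul_of_trace_eq_zero hx hy]
  exact ⟨okuboMul_okuboMul_self h3 hω hx y, okuboMul_self_okuboMul h3 hω hx y⟩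

/-- Let `F` be a field of characteristic not `3` containing a primitive cube root
of unity `ω`.  On trace-zero `3×3` matrices with the Okubo product one has
`(x*y)*x = x*(y*x) = sr(x)·y`, where `sr(x)` is the coefficient of `X` in the
characteristic polynomial of `x`. -/
theorem okubo_flexible
    (F : Type*) [Field F] (hchar : ringChar F ≠ 3)
    (ω : F) (hω3 : ω ^ 3 = 1) (hω1 : ω ≠ 1)
    (x y : Matrix (Fin 3) (Fin 3) F) (hx : x.trace = 0) (hy : y.trace = 0) :
    okuboMul F ω (okuboMul F ω x y) x = x.charpoly.coeff 1 • y ∧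
    okuboMul F ω x (okuboMul F ω y x) = x.charpoly.coeff 1 • y :=
  okubo_flexible_general F ω hω3 hω1 x y hx hy
end

section
/- Let F be a finite field, K/F a quadratic field extension with nontrivial F-automorphism τ, U a finite-dimensional K-vector space, and h a nondegenerate τ-hermitian form on U. Then U has an orthonormal K-basis: a basis u₁,…,uₙ with h(uᵢ,uᵢ) = 1 and h(uᵢ,uⱼ) = 0 for i ≠ j. -/
/-!
As `τ` generates `Gal(K/F)`, a `τ`-fixed scalar lies in `F`, so by surjectivity of the norm of
finite fields it is of the form `α * τ α`. Since `τ ≠ id`, polarization shows that a nondegenerate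
hermitian form has a vector `u` with `h u u ≠ 0`; as `h u u` is `τ`-fixed, rescaling `u` gives `e`
with `h e e = 1`. The orthogonal complement of `e` is again a nondegenerate hermitian space, of one
dimension less, so induction yields an orthonormal family of length `dim U`, which is a basis.
-/

open Module

section QuadraticGalois

variable {F K : Type*} [Field F] [Field K] [Algebra F K]

theorem AlgEquiv.eq_refl_or_eq_of_finrank_eq_two [FiniteDimensional F K] [IsGalois F K]
    (hdim : finrank F K = 2) {τ : K ≃ₐ[F] K} (hτ : τ ≠ AlgEquiv.refl) (σ : K ≃ₐ[F] K) :
    σ = AlgEquiv.refl ∨ σ = τ := by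
  by_contra! hσ
  have hcard : Fintype.card (K ≃ₐ[F] K) = 2 := by
    rw [← Nat.card_eq_fintype_card, IsGalois.card_aut_eq_finrank, hdim]
  have : 2 < Fintype.card (K ≃ₐ[F] K) :=
    Fintype.two_lt_card_iff.2 ⟨AlgEquiv.refl, τ, σ, hτ.symm, hσ.1.symm, hσ.2.symm⟩
  omega

theorem algebraMap_norm_eq_mul_of_finrank_eq_two [FiniteDimensional F K] [IsGalois F K]
    (hdim : finrank F K = 2) {τ : K ≃ₐ[F] K} (hτ : τ ≠ AlgEquiv.refl) (x : K) :
    algebraMap F K (Algebra.norm F x) = x * τ x := by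
  rw [Algebra.norm_eq_prod_automorphisms, Fintype.prod_eq_mul AlgEquiv.refl τ hτ.symm
    fun σ hσ =>
      (hσ.2 <| (AlgEquiv.eq_refl_or_eq_of_finrank_eq_two hdim hτ σ).resolve_left hσ.1).elim]
  rfl

theorem mem_range_algebraMap_of_finrank_eq_two [FiniteDimensional F K] [IsGalois F K]
    (hdim : finrank F K = 2) {τ : K ≃ₐ[F] K} (hτ : τ ≠ AlgEquiv.refl) {c : K} (hc : τ c = c) :
    c ∈ Set.range (algebraMap F K) := by
  refine (IsGalois.mem_range_algebraMap_iff_fixed c).2 fun σ => ?_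
  rcases AlgEquiv.eq_refl_or_eq_of_finrank_eq_two hdim hτ σ with rfl | rfl
  exacts [rfl, hc]

theorem FiniteField.exists_mul_eq_of_finrank_eq_two [Finite K] (hdim : finrank F K = 2)
    {τ : K ≃ₐ[F] K} (hτ : τ ≠ AlgEquiv.refl) {c : K} (hc : τ c = c) : ∃ α, α * τ α = c := by
  obtain ⟨a, rfl⟩ := mem_range_algebraMap_of_finrank_eq_two hdim hτ hc
  obtain ⟨α, rfl⟩ := FiniteField.norm_surjective F K a
  exact ⟨α, (algebraMap_norm_eq_mul_of_finrank_eq_two hdim hτ α).symm⟩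

end QuadraticGalois

structure IsHermitianForm {K U : Type*} [Field K] [AddCommGroup U] [Module K U]
    (τ : K →+* K) (h : U → U → K) : Prop where
  add_left : ∀ u v w : U, h (u + v) w = h u w + h v w
  smul_left : ∀ (α : K) (u v : U), h (α • u) v = α * h u v
  conj_symm : ∀ u v : U, h v u = τ (h u v)

namespace IsHermitianForm

variable {K U : Type*} [Field K] [AddCommGroup U] [Module K U] {τ : K →+* K} {h : U → U → K}

theorem add_right (hh : IsHermitianForm τ h) (u v w : U) : h u (v + w) = h u v + h u w := by
  rw [hh.conj_symm, hh.add_left, map_add, ← hh.conj_symm, ← hh.conj_symm]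

theorem smul_right (hh : IsHermitianForm τ h) (α : K) (u v : U) :
    h u (α • v) = τ α * h u v := by
  rw [hh.conj_symm, hh.smul_left, map_mul, ← hh.conj_symm]

theorem restrict (hh : IsHermitianForm τ h) (W : Submodule K U) :
    IsHermitianForm τ fun x y : W => h x y where
  add_left u v w := hh.add_left u v w
  smul_left α u v := hh.smul_left α u v
  conj_symm u v := hh.conj_symm u v

theorem exists_self_ne_zero [Nontrivial U] (hh : IsHermitianForm τ h) (hτ : τ ≠ RingHom.id K)
    (hnd : ∀ u : U, (∀ v : U, h u v = 0) → u = 0) : ∃ u, h u u ≠ 0 := by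
  by_contra! hiso
  obtain ⟨α, hα⟩ := DFunLike.ne_iff.1 hτ
  obtain ⟨u, hu⟩ := exists_ne (0 : U)
  refine hu (hnd u fun v => ?_)
  have h₁ := hiso (u + v)
  have h₂ := hiso (α • u + v)
  simp only [hh.add_left, hh.add_right, hh.smul_left, hh.smul_right, hiso, hh.conj_symm u v]
    at h₁ h₂
  have : (α - τ α) * h u v = 0 := by linear_combination h₂ - τ α * h₁
  exact (mul_eq_zero.1 this).resolve_left (sub_ne_zero.2 (Ne.symm hα))

theorem exists_self_eq_one [Nontrivial U] (hh : IsHermitianForm τ h) (hτ : τ ≠ RingHom.id K)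
    (hnorm : ∀ c, τ c = c → ∃ α, α * τ α = c)
    (hnd : ∀ u : U, (∀ v : U, h u v = 0) → u = 0) : ∃ e, h e e = 1 := by
  obtain ⟨u, hu⟩ := hh.exists_self_ne_zero hτ hnd
  obtain ⟨α, hα⟩ := hnorm (h u u)⁻¹ (by rw [map_inv₀, ← hh.conj_symm])
  refine ⟨α • u, ?_⟩
  rw [hh.smul_left, hh.smul_right, ← mul_assoc, hα, inv_mul_cancel₀ hu]

def applyRight (hh : IsHermitianForm τ h) (e : U) : U →ₗ[K] K where
  toFun v := h v e
  map_add' u v := hh.add_left u v e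
  map_smul' α v := hh.smul_left α v e

@[simp]
theorem applyRight_apply (hh : IsHermitianForm τ h) (e v : U) : hh.applyRight e v = h v e := rfl

theorem finrank_ker_applyRight_add_one [FiniteDimensional K U] (hh : IsHermitianForm τ h)
    {e : U} (he : h e e = 1) :
    finrank K (LinearMap.ker (hh.applyRight e)) + 1 = finrank K U := by
  have hsurj : Function.Surjective (hh.applyRight e) := fun c =>
    ⟨c • e, by rw [applyRight_apply, hh.smul_left, he, mul_one]⟩
  rw [← (hh.applyRight e).finrank_range_add_finrank_ker, LinearMap.range_eq_top.2 hsurj,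
    finrank_top, finrank_self, add_comm]

theorem nondegenerate_restrict_ker (hh : IsHermitianForm τ h)
    (hnd : ∀ u : U, (∀ v : U, h u v = 0) → u = 0) {e : U} (he : h e e = 1)
    (w : LinearMap.ker (hh.applyRight e))
    (hw : ∀ w' : LinearMap.ker (hh.applyRight e), h w w' = 0) :
    w = 0 := by
  have hwe : h w e = 0 := w.2
  refine Subtype.ext (hnd w fun v => ?_)
  have hv : v - h v e • e ∈ LinearMap.ker (hh.applyRight e) := by
    rw [LinearMap.mem_ker, map_sub, map_smul, applyRight_apply, applyRight_apply, he,
      smul_eq_mul, mul_one, sub_self]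
  calc h w v = h w (h v e • e) + h w (v - h v e • e) := by rw [← hh.add_right, add_sub_cancel]
    _ = 0 := by rw [hh.smul_right, hwe, mul_zero, zero_add, hw ⟨_, hv⟩]

theorem linearIndependent_of_orthonormal {ι : Type*} [Fintype ι] [DecidableEq ι]
    (hh : IsHermitianForm τ h) {b : ι → U} (hb : ∀ i j, h (b i) (b j) = if i = j then 1 else 0) :
    LinearIndependent K b := by
  refine Fintype.linearIndependent_iff.2 fun g hg j => ?_
  have := congrArg (hh.applyRight (b j)) hg
  rw [map_sum, map_zero] at this
  simpa [hb] using this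

theorem exists_orthonormal_fin (hτ : τ ≠ RingHom.id K) (hnorm : ∀ c, τ c = c → ∃ α, α * τ α = c)
    (n : ℕ) {U : Type*} [AddCommGroup U] [Module K U] [FiniteDimensional K U] {h : U → U → K}
    (hh : IsHermitianForm τ h) (hnd : ∀ u : U, (∀ v : U, h u v = 0) → u = 0)
    (hn : finrank K U = n) :
    ∃ b : Fin n → U, ∀ i j, h (b i) (b j) = if i = j then 1 else 0 := by
  induction n generalizing U with
  | zero => exact ⟨Fin.elim0, fun i => i.elim0⟩
  | succ n ih =>
    have : Nontrivial U := finrank_pos_iff (R := K) |>.1 (by omega)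
    obtain ⟨e, he⟩ := hh.exists_self_eq_one hτ hnorm hnd
    obtain ⟨b, hb⟩ := ih (hh.restrict _) (hh.nondegenerate_restrict_ker hnd he)
      (by have := hh.finrank_ker_applyRight_add_one he; omega)
    have hbe (i : Fin n) : h (b i) e = 0 := (b i).2
    have heb (i : Fin n) : h e (b i) = 0 := by rw [hh.conj_symm, hbe, map_zero]
    refine ⟨Fin.cons e fun i => b i, fun i j => ?_⟩
    cases i using Fin.cases <;> cases j using Fin.cases <;>
      simp [he, hbe, heb, hb, Fin.succ_ne_zero, (Fin.succ_ne_zero _).symm]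

end IsHermitianForm

theorem hermitian_orthonormal_basis_general
    (F K : Type*) [Field F] [Field K] [Fintype K]
    [Algebra F K] (hdim : Module.finrank F K = 2)
    (τ : K ≃ₐ[F] K) (hτ : τ ≠ AlgEquiv.refl)
    (U : Type*) [AddCommGroup U] [Module K U] [FiniteDimensional K U]
    (h : U → U → K)
    (hadd : ∀ u v w : U, h (u + v) w = h u w + h v w)
    (hsmul : ∀ (α : K) (u v : U), h (α • u) v = α * h u v)
    (hherm : ∀ u v : U, h v u = τ (h u v))
    (hnd : ∀ u : U, (∀ v : U, h u v = 0) → u = 0) :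
    ∃ b : Module.Basis (Fin (Module.finrank K U)) K U,
      ∀ i j, h (b i) (b j) = if i = j then 1 else 0 := by
  have hh : IsHermitianForm (τ : K →+* K) h := ⟨hadd, hsmul, hherm⟩
  have hτ_ne_id : (τ : K →+* K) ≠ RingHom.id K := fun H =>
    hτ (AlgEquiv.ext (DFunLike.congr_fun H ·))
  obtain ⟨b, hb⟩ := IsHermitianForm.exists_orthonormal_fin hτ_ne_id
    (fun _ hc => FiniteField.exists_mul_eq_of_finrank_eq_two hdim hτ hc) _ hh hnd rfl
  refine ⟨basisOfLinearIndependentOfCardEqFinrank' b (hh.linearIndependent_of_orthonormal hb)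
    (Fintype.card_fin _), fun i j => ?_⟩
  rw [coe_basisOfLinearIndependentOfCardEqFinrank', hb]

/-- Let `F` be a finite field, `K/F` a quadratic field extension with nontrivial
`F`-automorphism `τ`, `U` a finite-dimensional `K`-vector space, and `h` a
nondegenerate `τ`-hermitian form on `U`.  Then `U` has an orthonormal basis. -/
theorem hermitian_orthonormal_basis
    (F K : Type*) [Field F] [Field K] [Fintype F] [Fintype K]
    [Algebra F K] (hdim : Module.finrank F K = 2)
    (τ : K ≃ₐ[F] K) (hτ : τ ≠ AlgEquiv.refl)
    (U : Type*) [AddCommGroup U] [Module K U] [FiniteDimensional K U]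
    (h : U → U → K)
    (hadd : ∀ u v w : U, h (u + v) w = h u w + h v w)
    (hsmul : ∀ (α : K) (u v : U), h (α • u) v = α * h u v)
    (hherm : ∀ u v : U, h v u = τ (h u v))
    (hnd : ∀ u : U, (∀ v : U, h u v = 0) → u = 0) :
    ∃ b : Module.Basis (Fin (Module.finrank K U)) K U,
      ∀ i j, h (b i) (b j) = if i = j then 1 else 0 :=
  hermitian_orthonormal_basis_general F K hdim τ hτ U h hadd hsmul hherm hnd
end

section
/- Let (S, *, n) be a symmetric composition algebra over F and let x, y ∈ S with n(x) = n(y) = 0, x*y = 0, and all polar-form pairings between {x, x*x} and {y, y*y} equal to zero. Then n(y*x, (y*x)*(y*x)) = −n(y, y*y)·n(x, x*x). -/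
/-- In a symmetric composition algebra `(S, *, n)`, if `n(x) = n(y) = 0`,
`x*y = 0`, and all polar-form pairings between `{x, x*x}` and `{y, y*y}` vanish,
then `n(y*x, (y*x)*(y*x)) = − n(y, y*y) · n(x, x*x)`. -/
theorem norm_cubic_product
    (F : Type*) [Field F] (S : Type*) [AddCommGroup S] [Module F S]
    (mul : S →ₗ[F] S →ₗ[F] S) (n : QuadraticForm F S)
    (hmult : ∀ x y : S, n (mul x y) = n x * n y)
    (hassoc : ∀ x y z : S,
      QuadraticMap.polar n (mul x y) z = QuadraticMap.polar n x (mul y z))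
    (hxyx : ∀ x y : S, mul (mul x y) x = n x • y ∧ mul x (mul y x) = n x • y)
    (x y : S) (hx : n x = 0) (hy : n y = 0) (hxy : mul x y = 0)
    (h1 : QuadraticMap.polar n x y = 0)
    (h2 : QuadraticMap.polar n x (mul y y) = 0)
    (h3 : QuadraticMap.polar n (mul x x) y = 0)
    (h4 : QuadraticMap.polar n (mul x x) (mul y y) = 0) :
    QuadraticMap.polar n (mul y x) (mul (mul y x) (mul y x))
      = -(QuadraticMap.polar n y (mul y y) * QuadraticMap.polar n x (mul x x)) := by
  -- Linearized identities
  have lin1 : ∀ a b c : S, mul (mul a b) c + mul (mul c b) a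
      = QuadraticMap.polar n a c • b := by
    intro a b c
    have h := (hxyx (a + c) b).1
    have ha := (hxyx a b).1
    have hc := (hxyx c b).1
    simp only [map_add, LinearMap.add_apply] at h
    rw [QuadraticMap.polar, sub_smul, sub_smul, ← h, ← ha, ← hc]
    abel
  have lin2 : ∀ a b c : S, mul a (mul b c) + mul c (mul b a)
      = QuadraticMap.polar n a c • b := by
    intro a b c
    have h := (hxyx (a + c) b).2
    have ha := (hxyx a b).2
    have hc := (hxyx c b).2
    simp only [map_add, LinearMap.add_apply] at h
    rw [QuadraticMap.polar, sub_smul, sub_smul, ← h, ← ha, ← hc]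
    abel
  -- (y*y)*x = 0
  have h5 : mul (mul y y) x = 0 := by
    have h := lin1 y y x
    rw [hxy, QuadraticMap.polar_comm, h1, zero_smul] at h
    simpa using h
  -- (y*x)*x = -(x*x)*y
  have hA : mul (mul y x) x = - mul (mul x x) y := by
    have h := lin1 y x x
    rw [QuadraticMap.polar_comm, h1, zero_smul] at h
    exact eq_neg_of_add_eq_zero_left h
  -- polar (y*x) y = 0
  have hpol : QuadraticMap.polar n y (mul y x) = 0 := by
    rw [QuadraticMap.polar_comm, hassoc, hxy]
    simp [QuadraticMap.polar]
  -- (y*x)*(y*x) = ((x*x)*y)*y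
  have hB : mul (mul y x) (mul y x) = mul (mul (mul x x) y) y := by
    have h := lin1 y x (mul y x)
    rw [hpol, zero_smul, hA] at h
    have h' := eq_neg_of_add_eq_zero_right h
    simp only [map_neg, LinearMap.neg_apply, neg_inj] at h'
    exact h'.symm
  -- ((x*x)*y)*y = -(y*y)*(x*x)
  have hC : mul (mul (mul x x) y) y = - mul (mul y y) (mul x x) := by
    have h := lin1 (mul x x) y y
    rw [h3, zero_smul] at h
    exact eq_neg_of_add_eq_zero_left h
  -- x * ((y*y)*(x*x)) = polar x (x*x) • (y*y)
  have hD : mul x (mul (mul y y) (mul x x))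
      = QuadraticMap.polar n x (mul x x) • mul y y := by
    have h := lin2 x (mul y y) (mul x x)
    rw [h5] at h
    simpa using h
  rw [hB, hC, QuadraticMap.polar_neg_right, hassoc, hD,
    QuadraticMap.polar_smul_right, smul_eq_mul]
  ring
end

section
/- Let Γ be a grading of an Okubo algebra O by an abelian group G with trivial identity component (a special grading), and let H be the subgroup generated by the support, which is isomorphic to (ℤ/3)². Then the map Φ_Γ : H → F×/(F×)³ sending e to [1] and h ≠ e to [n(u, u*u)] for any nonzero homogeneous u of degree h, is a well-defined group homomorphism. -/
/-- Let `Γ : O = ⊕_{g ∈ G} O_g` be a special grading (trivial identity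
component) of an Okubo algebra `O` (an 8-dimensional symmetric composition
algebra) by an abelian group `G`, and let `H` be the subgroup generated by the
support, which is isomorphic to `(ℤ/3)²`.  Then `n(u, u*u) ≠ 0` for every
nonzero homogeneous `u` of degree `h ≠ e`, and the map
`Φ_Γ : H → F×/(F×)³`, `e ↦ [1]`, `h ↦ [n(u, u*u)]` for `0 ≠ u ∈ O_h`,
is a well-defined group homomorphism. -/
theorem Phi_Gamma_well_defined_hom
    (F : Type*) [Field F] (O : Type*) [AddCommGroup O] [Module F O]
    (mul : O →ₗ[F] O →ₗ[F] O) (n : QuadraticForm F O)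
    (hmult : ∀ x y : O, n (mul x y) = n x * n y)
    (hassoc : ∀ x y z : O,
      QuadraticMap.polar n (mul x y) z = QuadraticMap.polar n x (mul y z))
    (hxyx : ∀ x y : O, mul (mul x y) x = n x • y ∧ mul x (mul y x) = n x • y)
    (hns : ∀ x : O, (∀ y : O, QuadraticMap.polar n x y = 0) → n x = 0 → x = 0)
    (hdim : Module.finrank F O = 8)
    (G : Type*) [CommGroup G] [DecidableEq G] (𝒪 : G → Submodule F O)
    (hdecomp : DirectSum.IsInternal 𝒪)
    (hgrmul : ∀ g h : G, ∀ x ∈ 𝒪 g, ∀ y ∈ 𝒪 h, mul x y ∈ 𝒪 (g * h))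
    (hspecial : 𝒪 1 = ⊥)
    (H : Subgroup G) (hHgen : H = Subgroup.closure {g : G | 𝒪 g ≠ ⊥})
    (hH : Nonempty (H ≃* Multiplicative (ZMod 3 × ZMod 3))) :
    (∀ h : G, h ≠ 1 → ∀ u ∈ 𝒪 h, u ≠ 0 →
        QuadraticMap.polar n u (mul u u) ≠ 0) ∧
    ∃ Φ : H →* Fˣ ⧸ (powMonoidHom 3 : Fˣ →* Fˣ).range,
      ∀ h : H, (h : G) ≠ 1 → ∀ u ∈ 𝒪 (h : G), u ≠ 0 →
        ∀ c : Fˣ, (c : F) = QuadraticMap.polar n u (mul u u) →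
          Φ h = QuotientGroup.mk c := by
  classical
  obtain ⟨e⟩ := hH
  have hO : Nontrivial O :=
    Module.nontrivial_of_finrank_pos (R := F) (by rw [hdim]; norm_num)
  obtain ⟨o0, ho0⟩ := exists_ne (0 : O)
  -- the two linearizations of `(x*y)*x = n(x) y = x*(y*x)`
  have I1 : ∀ x y z : O, mul (mul x z) y + mul (mul y z) x
      = QuadraticMap.polar n x y • z := by
    intro x y z
    have e1 := (hxyx x z).1
    have e2 := (hxyx y z).1
    have e3 := (hxyx (x + y) z).1
    simp only [map_add, LinearMap.add_apply] at e3
    rw [QuadraticMap.polar, sub_smul, sub_smul, ← e3, ← e1, ← e2]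
    abel
  have I2 : ∀ x y z : O, mul x (mul z y) + mul y (mul z x)
      = QuadraticMap.polar n x y • z := by
    intro x y z
    have e1 := (hxyx x z).2
    have e2 := (hxyx y z).2
    have e3 := (hxyx (x + y) z).2
    simp only [map_add, LinearMap.add_apply] at e3
    rw [QuadraticMap.polar, sub_smul, sub_smul, ← e3, ← e1, ← e2]
    abel
  have hmem : ∀ {a c : G} {x y : O}, x ∈ 𝒪 a → y ∈ 𝒪 c → mul x y ∈ 𝒪 (a * c) :=
    fun {a c x y} hx hy => hgrmul a c x hx y hy
  have hzero : ∀ {a c : G} {x y : O}, x ∈ 𝒪 a → y ∈ 𝒪 c → a * c = 1 →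
      mul x y = 0 := by
    intro a c x y hx hy h1
    have h := hmem hx hy
    rw [h1, hspecial, Submodule.mem_bot] at h
    exact h
  have hdisj : ∀ {a c : G}, a ≠ c → ∀ {x : O}, x ∈ 𝒪 a → x ∈ 𝒪 c → x = 0 := by
    intro a c hac x hx hy
    have hd : Disjoint (𝒪 a) (𝒪 c) :=
      hdecomp.submodule_iSupIndep.pairwiseDisjoint hac
    exact (Submodule.disjoint_def.mp hd) x hx hy
  -- orthogonality of homogeneous components
  have orth : ∀ {g k : G} {x y : O}, x ∈ 𝒪 g → y ∈ 𝒪 k → g * k ≠ 1 →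
      QuadraticMap.polar n x y = 0 := by
    intro g k x y hx hy hgk
    by_contra hb
    have hz : ∀ m : G, ∀ z ∈ 𝒪 m, z = (0 : O) := by
      intro m z hzm
      have h1 : QuadraticMap.polar n x y • z ∈ 𝒪 m := Submodule.smul_mem _ _ hzm
      have h2 : QuadraticMap.polar n x y • z ∈ 𝒪 (g * m * k) := by
        rw [← I1 x y z]
        refine Submodule.add_mem _ (hmem (hmem hx hzm) hy) ?_
        have hcomm : k * m * g = g * m * k := by
          rw [mul_comm k m, mul_comm _ g, ← mul_assoc]
        exact hcomm ▸ hmem (hmem hy hzm) hx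
      have hne : m ≠ g * m * k := by
        intro hcon
        apply hgk
        have h3 : g * m * k = m * (g * k) := by rw [mul_comm g m, mul_assoc]
        rw [h3] at hcon
        have h4 : m * 1 = m * (g * k) := by rw [mul_one]; exact hcon
        exact (mul_left_cancel h4).symm
      have h5 := hdisj hne h1 h2
      rcases smul_eq_zero.mp h5 with h | h
      · exact absurd h hb
      · exact h
    have htop : ∀ z : O, z = 0 := by
      intro z
      have hzt : z ∈ ⨆ m, 𝒪 m := by
        rw [hdecomp.submodule_iSup_eq_top]; trivial
      exact Submodule.iSup_induction 𝒪 (motive := fun w => w = 0) hzt hz rfl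
        (fun a b ha hb => by rw [ha, hb, add_zero])
    exact ho0 (htop o0)
  -- elements of the support have order 3
  have hcube : ∀ {k : G}, 𝒪 k ≠ ⊥ → k ≠ 1 ∧ k ^ 3 = 1 := by
    intro k hk
    have hk1 : k ≠ 1 := fun h => hk (h ▸ hspecial)
    have hkH : k ∈ H := hHgen ▸ Subgroup.subset_closure hk
    have h3 : ∀ y : Multiplicative (ZMod 3 × ZMod 3), y ^ 3 = 1 := by decide
    have h4 : (⟨k, hkH⟩ : H) ^ 3 = 1 := e.injective (by rw [map_pow, h3, map_one])
    refine ⟨hk1, ?_⟩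
    have h5 := congrArg (Subtype.val) h4
    simpa using h5
  have hk2 : ∀ {k : G}, k ≠ 1 → k ^ 3 = 1 →
      (k * k ≠ 1 ∧ (k * k) ^ 3 = 1 ∧ (k * k)⁻¹ = k) := by
    intro k hk1 hk3
    have hkkk : k * k * k = 1 := by rw [← pow_three']; exact hk3
    refine ⟨?_, ?_, ?_⟩
    · intro h
      apply hk1
      have h1 : k = k * (k * k) := by rw [h, mul_one]
      rw [← mul_assoc, hkkk] at h1
      exact h1
    · rw [mul_pow, hk3, one_mul]
    · exact inv_eq_of_mul_eq_one_right (by rw [mul_assoc, ← pow_three]; exact hk3)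
  have hn0 : ∀ {k : G} {u : O}, u ∈ 𝒪 k → k ≠ 1 → k ^ 3 = 1 → n u = 0 := by
    intro k u hu hk1 hk3
    rcases eq_or_ne u 0 with rfl | hu0
    · exact map_zero n
    · have h1 : mul (mul u u) u = 0 :=
        hzero (hmem hu hu) hu (by rw [← pow_three']; exact hk3)
      have h2 := (hxyx u u).1
      rw [h1] at h2
      rcases smul_eq_zero.mp h2.symm with h | h
      · exact h
      · exact absurd h hu0
  -- nondegeneracy of the pairing on a homogeneous component
  have hnd : ∀ {k : G} {u : O}, u ∈ 𝒪 k → k ≠ 1 → k ^ 3 = 1 →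
      (∀ y ∈ 𝒪 k⁻¹, QuadraticMap.polar n u y = 0) → u = 0 := by
    intro k u hu hk1 hk3 hy
    refine hns u ?_ (hn0 hu hk1 hk3)
    intro y
    have hyt : y ∈ ⨆ m, 𝒪 m := by rw [hdecomp.submodule_iSup_eq_top]; trivial
    refine Submodule.iSup_induction 𝒪
      (motive := fun w => QuadraticMap.polar n u w = 0) hyt ?_ ?_ ?_
    · intro m z hz
      by_cases hm : k * m = 1
      · exact hy z ((eq_inv_of_mul_eq_one_right hm) ▸ hz)
      · exact orth hu hz hm
    · simp [QuadraticMap.polar]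
    · intro a b ha hb
      rw [QuadraticMap.polar_add_right, ha, hb, add_zero]
  have hex : ∀ {k : G} {u : O}, u ∈ 𝒪 k → k ≠ 1 → k ^ 3 = 1 → u ≠ 0 →
      ∃ y ∈ 𝒪 k⁻¹, QuadraticMap.polar n u y ≠ 0 := by
    intro k u hu hk1 hk3 hu0
    by_contra hcon
    push_neg at hcon
    exact hu0 (hnd hu hk1 hk3 hcon)
  -- squares of nonzero homogeneous elements are nonzero
  have hsq : ∀ {k : G} {u : O}, u ∈ 𝒪 k → k ≠ 1 → k ^ 3 = 1 → u ≠ 0 →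
      mul u u ≠ 0 := by
    intro k u hu hk1 hk3 hu0 hww
    obtain ⟨y, hy, hby⟩ := hex hu hk1 hk3 hu0
    have h1 := I1 u y u
    rw [hww, hzero hy hu (inv_mul_cancel k)] at h1
    simp only [map_zero, LinearMap.zero_apply, add_zero, zero_add] at h1
    rcases smul_eq_zero.mp h1.symm with h | h
    · exact hby h
    · exact hu0 h
  -- (u*u)*(u*u) = α • u
  have hww' : ∀ {k : G} {u : O}, u ∈ 𝒪 k → k ≠ 1 → k ^ 3 = 1 →
      mul (mul u u) (mul u u) = QuadraticMap.polar n u (mul u u) • u := by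
    intro k u hu hk1 hk3
    have h1 := I1 u (mul u u) u
    rw [hzero (hmem hu hu) hu (by rw [← pow_three']; exact hk3)] at h1
    simpa using h1
  -- α ≠ 0
  have halpha : ∀ {k : G} {u : O}, u ∈ 𝒪 k → k ≠ 1 → k ^ 3 = 1 → u ≠ 0 →
      QuadraticMap.polar n u (mul u u) ≠ 0 := by
    intro k u hu hk1 hk3 hu0 hα
    have hw0 : mul u u ≠ 0 := hsq hu hk1 hk3 hu0
    obtain ⟨h21, h23, -⟩ := hk2 hk1 hk3
    refine hsq (hmem hu hu) h21 h23 hw0 ?_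
    rw [hww' hu hk1 hk3, hα, zero_smul]
  -- Lemma C: 𝒪 k⁻¹ is spanned by u*u
  have hC : ∀ {k : G} {u : O}, u ∈ 𝒪 k → k ≠ 1 → k ^ 3 = 1 → ∀ y ∈ 𝒪 k⁻¹,
      QuadraticMap.polar n u (mul u u) • y
        = QuadraticMap.polar n u y • (mul u u) := by
    intro k u hu hk1 hk3 y hy
    have hwy : mul (mul u u) y = QuadraticMap.polar n u y • u := by
      have h1 := I1 u y u
      rw [hzero hy hu (inv_mul_cancel k)] at h1
      simpa using h1
    have h2 := I1 u (mul u u) y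
    rw [hzero hu hy (mul_inv_cancel k), hwy] at h2
    simp only [map_zero, LinearMap.zero_apply, zero_add, map_smul,
      LinearMap.smul_apply] at h2
    exact h2.symm
  -- Lemma D: 𝒪 k is spanned by any nonzero u ∈ 𝒪 k
  have hD : ∀ {k : G} {u : O}, u ∈ 𝒪 k → k ≠ 1 → k ^ 3 = 1 → u ≠ 0 →
      ∀ y ∈ 𝒪 k, ∃ c : F, y = c • u := by
    intro k u hu hk1 hk3 hu0 y hy
    obtain ⟨h21, h23, h2inv⟩ := hk2 hk1 hk3
    have hα0 : QuadraticMap.polar n u (mul u u) ≠ 0 := halpha hu hk1 hk3 hu0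
    have hwmem : mul u u ∈ 𝒪 (k * k) := hmem hu hu
    have hy' : y ∈ 𝒪 (k * k)⁻¹ := by rw [h2inv]; exact hy
    have h1 := hC hwmem h21 h23 y hy'
    rw [hww' hu hk1 hk3] at h1
    rw [QuadraticMap.polar_smul_right] at h1
    have hwu : QuadraticMap.polar n (mul u u) u
        = QuadraticMap.polar n u (mul u u) := QuadraticMap.polar_comm _ _ _
    rw [hwu, smul_eq_mul, smul_smul] at h1
    have hαα : QuadraticMap.polar n u (mul u u)
        * QuadraticMap.polar n u (mul u u) ≠ 0 := mul_ne_zero hα0 hα0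
    refine ⟨(QuadraticMap.polar n u (mul u u)
      * QuadraticMap.polar n u (mul u u))⁻¹
      * (QuadraticMap.polar n (mul u u) y
        * QuadraticMap.polar n u (mul u u)), ?_⟩
    rw [mul_smul, ← h1, smul_smul, inv_mul_cancel₀ hαα, one_smul]
  -- dichotomy: u*v ≠ 0 or v*u ≠ 0
  have hdich : ∀ {a c : G} {u v : O}, u ∈ 𝒪 a → v ∈ 𝒪 c → a ≠ 1 → a ^ 3 = 1 →
      u ≠ 0 → v ≠ 0 → a * c ≠ 1 → (mul u v ≠ 0 ∨ mul v u ≠ 0) := by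
    intro a c u v hu hv ha1 ha3 hu0 hv0 hac
    by_contra hcon
    push_neg at hcon
    obtain ⟨ht, hp⟩ := hcon
    have hb : QuadraticMap.polar n u v = 0 := orth hu hv hac
    have h1 := I1 u v u
    rw [hp, hb, zero_smul] at h1
    simp only [map_zero, LinearMap.zero_apply, add_zero] at h1
    have h2 := I1 u (mul u u) v
    rw [ht, h1] at h2
    simp only [map_zero, LinearMap.zero_apply, add_zero, zero_add] at h2
    rcases smul_eq_zero.mp h2.symm with h | h
    · exact halpha hu ha1 ha3 hu0 h
    · exact hv0 h
  -- every nontrivial element of H is in the support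
  have hsupp : ∀ k ∈ H, k ≠ 1 → 𝒪 k ≠ ⊥ := by
    intro k hkH hk1
    let K : Subgroup G :=
      { carrier := {g : G | g = 1 ∨ 𝒪 g ≠ ⊥}
        one_mem' := Or.inl rfl
        mul_mem' := by
          rintro a c ha hc
          simp only [Set.mem_setOf_eq] at *
          rcases ha with rfl | ha
          · rw [one_mul]; exact hc
          rcases hc with rfl | hc
          · rw [mul_one]; exact Or.inr ha
          by_cases hac : a * c = 1
          · exact Or.inl hac
          obtain ⟨u, hu, hu0⟩ := (Submodule.ne_bot_iff _).mp ha
          obtain ⟨v, hv, hv0⟩ := (Submodule.ne_bot_iff _).mp hc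
          obtain ⟨ha1, ha3⟩ := hcube ha
          refine Or.inr ((Submodule.ne_bot_iff _).mpr ?_)
          rcases hdich hu hv ha1 ha3 hu0 hv0 hac with h | h
          · exact ⟨mul u v, hmem hu hv, h⟩
          · exact ⟨mul v u, by rw [mul_comm]; exact hmem hv hu, h⟩
        inv_mem' := by
          rintro a ha
          simp only [Set.mem_setOf_eq] at *
          rcases ha with rfl | ha
          · exact Or.inl inv_one
          obtain ⟨u, hu, hu0⟩ := (Submodule.ne_bot_iff _).mp ha
          obtain ⟨ha1, ha3⟩ := hcube ha
          have hinv : a⁻¹ = a * a :=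
            inv_eq_of_mul_eq_one_left (by rw [← pow_three']; exact ha3)
          refine Or.inr ?_
          rw [hinv]
          exact (Submodule.ne_bot_iff _).mpr
            ⟨mul u u, hmem hu hu, hsq hu ha1 ha3 hu0⟩ }
    have hKH : H ≤ K := by
      rw [hHgen]
      exact (Subgroup.closure_le K).mpr (fun g hg => Or.inr hg)
    rcases hKH hkH with h | h
    · exact absurd h hk1
    · exact h
  -- the main multiplicativity computation
  have hM : ∀ {g h : G} {u v : O}, u ∈ 𝒪 g → v ∈ 𝒪 h →
      g ≠ 1 → g ^ 3 = 1 → h ≠ 1 → h ^ 3 = 1 → g ≠ h → g * h ≠ 1 →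
      u ≠ 0 → v ≠ 0 → mul u v ≠ 0 →
      QuadraticMap.polar n (mul u v) (mul (mul u v) (mul u v)) =
        -(QuadraticMap.polar n u (mul u u)
          * QuadraticMap.polar n v (mul v v)) := by
    intro g h u v hu hv hg1 hg3 hh1 hh3 hgh hgh1 hu0 hv0 ht0
    have dA1 : g * (g * h) ≠ 1 := by
      intro hcon
      apply hgh
      rw [← mul_assoc] at hcon
      have h1 : h = (g * g)⁻¹ := eq_inv_of_mul_eq_one_right hcon
      rw [(hk2 hg1 hg3).2.2] at h1
      exact h1.symm
    have dA2 : h * (g * g) ≠ 1 := by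
      intro hcon
      apply hgh
      have h1 : h = (g * g)⁻¹ := eq_inv_of_mul_eq_one_left hcon
      rw [(hk2 hg1 hg3).2.2] at h1
      exact h1.symm
    have dgh1 : (g * h) ≠ 1 := hgh1
    have dgh3 : (g * h) ^ 3 = 1 := by rw [mul_pow, hg3, hh3, one_mul]
    have hbuv : QuadraticMap.polar n u v = 0 := orth hu hv hgh1
    -- m1 : (u*v)*v = -((v*v)*u)
    have m1 : mul (mul u v) v = -(mul (mul v v) u) := by
      have h1 := I1 u v v
      rw [hbuv, zero_smul] at h1
      exact eq_neg_of_add_eq_zero_left h1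
    -- m2 : (u*v)*(u*v) = ((v*v)*u)*u
    have m2 : mul (mul u v) (mul u v) = mul (mul (mul v v) u) u := by
      have h2 := I1 u (mul u v) v
      rw [orth hu (hmem hu hv) dA1, zero_smul, m1] at h2
      simp only [map_neg, LinearMap.neg_apply] at h2
      rw [add_neg_eq_zero] at h2
      exact h2
    -- m4 : u*(u*v) = -(v*(u*u))
    have m4 : mul u (mul u v) = -(mul v (mul u u)) := by
      have h4 := I2 u v u
      rw [hbuv, zero_smul] at h4
      exact eq_neg_of_add_eq_zero_left h4
    -- m6 : u*(v*(u*u)) = α • v - (u*u)*(v*u)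
    have m6 : mul u (mul v (mul u u))
        = QuadraticMap.polar n u (mul u u) • v - mul (mul u u) (mul v u) := by
      have h6 := I2 u (mul u u) v
      exact eq_sub_of_add_eq h6
    -- m9 : polar (v*v) ((u*u)*(v*u)) = 0
    have m9 : QuadraticMap.polar n (mul v v) (mul (mul u u) (mul v u)) = 0 := by
      -- v*u = c • (u*v)
      have hpmem : mul v u ∈ 𝒪 (g * h) := by
        rw [mul_comm g h]; exact hmem hv hu
      obtain ⟨c, hc⟩ := hD (hmem hu hv) dgh1 dgh3 ht0 (mul v u) hpmem
      rw [hc, map_smul, QuadraticMap.polar_smul_right]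
      -- polar (v*v) ((u*u)*(u*v)) = 0
      have h9 : QuadraticMap.polar n (mul v v) (mul (mul u u) (mul u v)) = 0 := by
        rw [← hassoc (mul v v) (mul u u) (mul u v)]
        rw [QuadraticMap.polar_comm]
        rw [hassoc u v (mul (mul v v) (mul u u))]
        have h10 : mul v (mul (mul v v) (mul u u)) = 0 := by
          have h11 := I2 v (mul u u) (mul v v)
          rw [orth hv (hmem hu hu) dA2, zero_smul] at h11
          have h12 : mul (mul v v) v = 0 := by
            rw [(hxyx v v).1, hn0 hv hh1 hh3, zero_smul]
          rw [h12, map_zero, add_zero] at h11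
          exact h11
        rw [h10]
        simp [QuadraticMap.polar]
      rw [h9, smul_zero]
    -- assemble
    calc QuadraticMap.polar n (mul u v) (mul (mul u v) (mul u v))
        = QuadraticMap.polar n (mul (mul u v) (mul u v)) (mul u v) :=
          QuadraticMap.polar_comm _ _ _
      _ = QuadraticMap.polar n (mul (mul (mul v v) u) u) (mul u v) := by
          rw [m2]
      _ = QuadraticMap.polar n (mul (mul v v) u) (mul u (mul u v)) :=
          hassoc _ _ _
      _ = -(QuadraticMap.polar n (mul (mul v v) u) (mul v (mul u u))) := by
          rw [m4, QuadraticMap.polar_neg_right]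
      _ = -(QuadraticMap.polar n (mul v v) (mul u (mul v (mul u u)))) := by
          rw [hassoc (mul v v) u (mul v (mul u u))]
      _ = -(QuadraticMap.polar n u (mul u u)
            * QuadraticMap.polar n v (mul v v)) := by
          rw [m6, QuadraticMap.polar_sub_right, QuadraticMap.polar_smul_right,
            m9, sub_zero, smul_eq_mul,
            QuadraticMap.polar_comm (⇑n) (mul v v) v]
  -- scaling behaviour of α
  have hscale : ∀ (c : F) (u : O),
      QuadraticMap.polar n (c • u) (mul (c • u) (c • u))
        = c ^ 3 * QuadraticMap.polar n u (mul u u) := by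
    intro c u
    have h1 : mul (c • u) (c • u) = (c * c) • mul u u := by
      rw [LinearMap.map_smul₂, map_smul, smul_smul]
    rw [h1, QuadraticMap.polar_smul_left, QuadraticMap.polar_smul_right,
      smul_eq_mul, smul_eq_mul]
    ring
  -- choice of homogeneous generators
  have hpick : ∀ k : G, ∃ u : O, (𝒪 k ≠ ⊥ → u ∈ 𝒪 k ∧ u ≠ 0) := by
    intro k
    by_cases hk : 𝒪 k = ⊥
    · exact ⟨0, fun h => absurd hk h⟩
    · obtain ⟨u, hu, hu0⟩ := (Submodule.ne_bot_iff _).mp hk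
      exact ⟨u, fun _ => ⟨hu, hu0⟩⟩
    
  choose U hU using hpick
  have hunit : ∀ k : G, ∃ ck : Fˣ, (𝒪 k ≠ ⊥ →
      (ck : F) = QuadraticMap.polar n (U k) (mul (U k) (U k))) := by
    intro k
    by_cases hk : 𝒪 k = ⊥
    · exact ⟨1, fun h => absurd hk h⟩
    · obtain ⟨hk1, hk3⟩ := hcube hk
      obtain ⟨hUk, hU0⟩ := hU k hk
      exact ⟨Units.mk0 _ (halpha hUk hk1 hk3 hU0), fun _ => rfl⟩
  choose CU hCU using hunit
  -- congruence modulo cubes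
  have hqc : ∀ (a b : Fˣ) (c : F), (a : F) = c ^ 3 * (b : F) →
      (QuotientGroup.mk a : Fˣ ⧸ (powMonoidHom 3 : Fˣ →* Fˣ).range)
        = QuotientGroup.mk b := by
    intro a b c hc
    have hc0 : c ≠ 0 := by
      intro h
      apply a.ne_zero
      rw [hc, h]; ring
    refine (QuotientGroup.eq).mpr (MonoidHom.mem_range.mpr
      ⟨(Units.mk0 c hc0)⁻¹, Units.ext ?_⟩)
    have hb0 : (b : F) ≠ 0 := b.ne_zero
    rw [powMonoidHom_apply]
    push_cast
    rw [hc]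
    simp only [Units.val_mk0]
    field_simp
  -- well-definedness of the value on each component
  have hwd : ∀ k : G, k ≠ 1 → ∀ u ∈ 𝒪 k, u ≠ 0 → ∀ c : Fˣ,
      (c : F) = QuadraticMap.polar n u (mul u u) →
      (QuotientGroup.mk (CU k)
        : Fˣ ⧸ (powMonoidHom 3 : Fˣ →* Fˣ).range) = QuotientGroup.mk c := by
    intro k hk1 u hu hu0 c hc
    have hk : 𝒪 k ≠ ⊥ := (Submodule.ne_bot_iff _).mpr ⟨u, hu, hu0⟩
    obtain ⟨-, hk3⟩ := hcube hk
    obtain ⟨hUk, hU0⟩ := hU k hk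
    obtain ⟨c0, hc0⟩ := hD hUk hk1 hk3 hU0 u hu
    have hval : (c : F) = c0 ^ 3 * (CU k : F) := by
      rw [hc, hc0, hscale, hCU k hk]
    exact (hqc c (CU k) c0 hval).symm
  refine ⟨?_, ?_⟩
  · intro h h1 u hu hu0
    have hbot : 𝒪 h ≠ ⊥ := (Submodule.ne_bot_iff _).mpr ⟨u, hu, hu0⟩
    exact halpha hu h1 (hcube hbot).2 hu0
  · have mkmul : ∀ x y : Fˣ,
        (QuotientGroup.mk (x * y)
          : Fˣ ⧸ (powMonoidHom 3 : Fˣ →* Fˣ).range)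
          = QuotientGroup.mk x * QuotientGroup.mk y := fun x y => rfl
    refine ⟨MonoidHom.mk' (fun k : H => QuotientGroup.mk
      (if (k : G) = 1 then 1 else CU (k : G))) ?_, ?_⟩
    · -- multiplicativity
      intro a b
      by_cases ha1 : (a : G) = 1
      · have ha : a = (1 : H) := by
          apply Subtype.ext
          simpa using ha1
        subst ha
        simp only [one_mul, OneMemClass.coe_one]
        simp only [if_true]
        rw [← mkmul, one_mul]
      by_cases hb1 : (b : G) = 1
      · have hb : b = (1 : H) := by
          apply Subtype.ext
          simpa using hb1
        subst hb
        simp only [mul_one, OneMemClass.coe_one]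
        simp only [if_true]
        rw [← mkmul, mul_one]
      obtain ⟨-, ha3⟩ := hcube (hsupp _ a.2 ha1)
      obtain ⟨-, hb3⟩ := hcube (hsupp _ b.2 hb1)
      have hOa : 𝒪 (a : G) ≠ ⊥ := hsupp _ a.2 ha1
      have hOb : 𝒪 (b : G) ≠ ⊥ := hsupp _ b.2 hb1
      obtain ⟨hua, hua0⟩ := hU _ hOa
      obtain ⟨hvb, hvb0⟩ := hU _ hOb
      have hα0 : QuadraticMap.polar n (U (a : G))
          (mul (U (a : G)) (U (a : G))) ≠ 0 := halpha hua ha1 ha3 hua0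
      have hwvalA : QuadraticMap.polar n (mul (U (a : G)) (U (a : G)))
          (mul (mul (U (a : G)) (U (a : G))) (mul (U (a : G)) (U (a : G))))
          = QuadraticMap.polar n (U (a : G)) (mul (U (a : G)) (U (a : G)))
            * QuadraticMap.polar n (U (a : G)) (mul (U (a : G)) (U (a : G))) := by
        rw [hww' hua ha1 ha3, QuadraticMap.polar_smul_right, smul_eq_mul,
          QuadraticMap.polar_comm (⇑n) (mul (U (a : G)) (U (a : G))) (U (a : G))]
      by_cases hab1 : (a : G) * (b : G) = 1
      · -- inverse case
        simp only [Subgroup.coe_mul]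
        rw [if_pos hab1, if_neg ha1, if_neg hb1]
        have hbinv : (b : G) = (a : G)⁻¹ := eq_inv_of_mul_eq_one_right hab1
        have hv' : U (b : G) ∈ 𝒪 ((a : G))⁻¹ := by rw [← hbinv]; exact hvb
        have hCeq := hC hua ha1 ha3 (U (b : G)) hv'
        obtain ⟨lam, hlam⟩ : ∃ l : F, U (b : G)
            = l • mul (U (a : G)) (U (a : G)) :=
          ⟨_, by rw [mul_smul, ← hCeq, smul_smul, inv_mul_cancel₀ hα0, one_smul]⟩
        have hbval : QuadraticMap.polar n (U (b : G))
            (mul (U (b : G)) (U (b : G)))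
            = lam ^ 3
              * (QuadraticMap.polar n (U (a : G)) (mul (U (a : G)) (U (a : G)))
                * QuadraticMap.polar n (U (a : G)) (mul (U (a : G)) (U (a : G)))) := by
          rw [hlam, hscale, hwvalA]
        symm
        rw [← mkmul]
        have h1 := hqc (CU (a : G) * CU (b : G)) 1
          (lam * QuadraticMap.polar n (U (a : G)) (mul (U (a : G)) (U (a : G)))) ?_
        · exact h1
        · push_cast
          rw [hCU _ hOa, hCU _ hOb, hbval]
          ring
      · -- product stays in the support
        simp only [Subgroup.coe_mul]
        rw [if_neg hab1, if_neg ha1, if_neg hb1]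
        by_cases heq : (a : G) = (b : G)
        · -- a = b : use the square
          have h1 : (QuotientGroup.mk (CU (a : G))
              : Fˣ ⧸ (powMonoidHom 3 : Fˣ →* Fˣ).range)
              = QuotientGroup.mk (CU (b : G)) :=
            hwd (a : G) ha1 (U (b : G)) (by rw [heq]; exact hvb) hvb0
              (CU (b : G)) (hCU _ hOb)
          have hwmem : mul (U (a : G)) (U (a : G)) ∈ 𝒪 ((a : G) * (b : G)) := by
            rw [← heq]; exact hmem hua hua
          have hw0 : mul (U (a : G)) (U (a : G)) ≠ 0 := hsq hua ha1 ha3 hua0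
          have h2 := hwd ((a : G) * (b : G)) hab1 (mul (U (a : G)) (U (a : G)))
            hwmem hw0 (CU (a : G) * CU (a : G))
            (by push_cast; rw [hCU _ hOa, hwvalA])
          rw [h2, mkmul, h1]
        · -- independent case
          rcases hdich hua hvb ha1 ha3 hua0 hvb0 hab1 with ht | hp
          · have hMv := hM hua hvb ha1 ha3 hb1 hb3 heq hab1 hua0 hvb0 ht
            have h2 := hwd ((a : G) * (b : G)) hab1 (mul (U (a : G)) (U (b : G)))
              (hmem hua hvb) ht (-(CU (a : G) * CU (b : G)))
              (by push_cast; rw [hCU _ hOa, hCU _ hOb, hMv])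
            rw [h2, ← mkmul]
            refine hqc _ _ (-1) ?_
            push_cast
            ring
          · have hMv := hM hvb hua hb1 hb3 ha1 ha3 (Ne.symm heq)
              (by rw [mul_comm]; exact hab1) hvb0 hua0 hp
            have hpmem : mul (U (b : G)) (U (a : G)) ∈ 𝒪 ((a : G) * (b : G)) := by
              rw [mul_comm]; exact hmem hvb hua
            have h2 := hwd ((a : G) * (b : G)) hab1 (mul (U (b : G)) (U (a : G)))
              hpmem hp (-(CU (a : G) * CU (b : G)))
              (by push_cast; rw [hCU _ hOa, hCU _ hOb, hMv]; ring)
            rw [h2, ← mkmul]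
            refine hqc _ _ (-1) ?_
            push_cast
            ring
    · intro h hh1 u hu hu0 c hc
      simp only [MonoidHom.mk'_apply, if_neg hh1]
      exact hwd (h : G) hh1 u hu hu0 c hc
end
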